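/- arXiv:2306.16278 — 11 statements merged into one kernel-verified Lean document; each statement's English description precedes it below -/
import Mathlib

section
/- Let (X, d) be a separable metric space, μ a Borel probability measure on X, and u ∈ supp(μ). For every null sequence (Δ_n) of positive reals there exist null sequences (r_n) and (ε_n) of positive reals such that for all n, μ(B(u, r_n − Δ_n)) ≥ (1 − ε_n) μ(B(u, r_n)). -/
open MeasureTheory Metric Filter Topology

lemma key_lemma {X : Type*} [MetricSpace X] [MeasurableSpace X]
    (μ : Measure X) [IsProbabilityMeasure μ] (u : X)
    (hu : ∀ r : ℝ, 0 < r → 0 < μ (ball u r))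
    (a ε : ℝ) (ha : 0 < a) (hε : 0 < ε) :
    ∃ δ > 0, ∀ Δ' : ℝ, 0 < Δ' → Δ' < δ →
      ∃ r, 0 < r ∧ r ≤ a ∧
        ENNReal.ofReal (1 - ε) * μ (ball u r) ≤ μ (ball u (r - Δ')) := by
  set q := ENNReal.ofReal (1 - ε) with hqdef
  have hq1 : q < 1 := ENNReal.ofReal_lt_one.2 (by linarith)
  have hc : 0 < μ (ball u (a / 2)) := hu _ (by positivity)
  obtain ⟨K, hK⟩ : ∃ K : ℕ, q ^ K < μ (ball u (a / 2)) :=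
    ((ENNReal.tendsto_pow_atTop_nhds_zero_of_lt_one hq1).eventually_lt_const hc).exists
  refine ⟨a / (2 * (K + 1)), by positivity, ?_⟩
  intro Δ' hΔ' hΔ'lt
  by_contra hcon
  push_neg at hcon
  have hstep : ∀ k : ℕ, k ≤ K + 1 →
      μ (ball u (a / 2)) ≤ q ^ k * μ (ball u (a / 2 + k * Δ')) := by
    intro k hk
    induction k with
    | zero => simp
    | succ k ih =>
      have ih' := ih (by omega)
      have hrpos : (0:ℝ) < a / 2 + (k + 1 : ℕ) * Δ' := by positivity
      have h3 : ((K + 1 : ℕ) : ℝ) * Δ' ≤ a / 2 := by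
        push_cast
        rw [lt_div_iff₀ (by positivity : (0:ℝ) < 2 * ((K:ℝ) + 1))] at hΔ'lt
        nlinarith
      have hra : a / 2 + ((k + 1 : ℕ) : ℝ) * Δ' ≤ a := by
        have h1 : ((k + 1 : ℕ) : ℝ) ≤ ((K + 1 : ℕ) : ℝ) := by exact_mod_cast hk
        have h2 : ((k + 1 : ℕ) : ℝ) * Δ' ≤ ((K + 1 : ℕ) : ℝ) * Δ' :=
          mul_le_mul_of_nonneg_right h1 hΔ'.le
        linarith
      have hcc := hcon _ hrpos hra
      have heq : a / 2 + ((k + 1 : ℕ) : ℝ) * Δ' - Δ' = a / 2 + (k : ℕ) * Δ' := by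
        push_cast; ring
      rw [heq] at hcc
      calc μ (ball u (a / 2)) ≤ q ^ k * μ (ball u (a / 2 + k * Δ')) := ih'
      _ ≤ q ^ k * (q * μ (ball u (a / 2 + (k + 1 : ℕ) * Δ'))) :=
          mul_le_mul_right hcc.le _
      _ = q ^ (k + 1) * μ (ball u (a / 2 + (k + 1 : ℕ) * Δ')) := by ring
  have hfin := hstep (K + 1) le_rfl
  have hle1 : μ (ball u (a / 2 + (K + 1 : ℕ) * Δ')) ≤ 1 := prob_le_one
  have hle : μ (ball u (a / 2)) ≤ q ^ (K + 1) := by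
    calc μ (ball u (a / 2)) ≤ q ^ (K + 1) * μ (ball u (a / 2 + (K + 1 : ℕ) * Δ')) := hfin
    _ ≤ q ^ (K + 1) * 1 := mul_le_mul_right hle1 _
    _ = q ^ (K + 1) := mul_one _
  have hless : q ^ (K + 1) < μ (ball u (a / 2)) := by
    calc q ^ (K + 1) = q ^ K * q := pow_succ q K
    _ ≤ q ^ K * 1 := mul_le_mul_right hq1.le _
    _ = q ^ K := mul_one _
    _ < _ := hK
  exact absurd (hle.trans_lt hless) (lt_irrefl _)

theorem stmt4 {X : Type*} [MetricSpace X] [TopologicalSpace.SeparableSpace X]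
    [MeasurableSpace X] [BorelSpace X] (μ : Measure X) [IsProbabilityMeasure μ]
    (u : X) (hu : ∀ r : ℝ, 0 < r → 0 < μ (ball u r))
    (Δ : ℕ → ℝ) (hΔpos : ∀ n, 0 < Δ n) (hΔ : Tendsto Δ atTop (𝓝 0)) :
    ∃ r ε : ℕ → ℝ, (∀ n, 0 < r n) ∧ Tendsto r atTop (𝓝 0) ∧
      (∀ n, 0 < ε n) ∧ Tendsto ε atTop (𝓝 0) ∧
      ∀ n, ENNReal.ofReal (1 - ε n) * μ (ball u (r n)) ≤ μ (ball u (r n - Δ n)) := by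
  have hkey : ∀ m : ℕ, ∃ δ > 0, ∀ Δ' : ℝ, 0 < Δ' → Δ' < δ →
      ∃ r, 0 < r ∧ r ≤ 1 / ((m : ℝ) + 1) ∧
        ENNReal.ofReal (1 - 1 / ((m : ℝ) + 1)) * μ (ball u r) ≤ μ (ball u (r - Δ')) := by
    intro m
    exact key_lemma μ u hu (1 / ((m : ℝ) + 1)) (1 / ((m : ℝ) + 1)) (by positivity) (by positivity)
  choose δ hδpos hδ using hkey
  have hN0 : ∀ m : ℕ, ∃ N : ℕ, ∀ n ≥ N, Δ n < δ m := by
    intro m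
    exact eventually_atTop.1 (hΔ.eventually (eventually_lt_nhds (hδpos m)))
  choose N0 hN0 using hN0
  set N : ℕ → ℕ := fun m => if m = 0 then 0 else N0 m with hNdef
  set M : ℕ → ℕ := fun n => Nat.findGreatest (fun m => N m ≤ n) n with hMdef
  have hMspec : ∀ n, N (M n) ≤ n := by
    intro n
    exact Nat.findGreatest_spec (P := fun m => N m ≤ n) (Nat.zero_le n) (by simp [hNdef])
  have hMtend : Tendsto M atTop atTop := by
    rw [tendsto_atTop_atTop]
    intro m
    refine ⟨max m (N m), fun n hn => ?_⟩
    exact Nat.le_findGreatest (le_trans (le_max_left _ _) hn)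
      (le_trans (le_max_right _ _) hn)
  have hrex : ∀ n, ∃ r : ℝ, 0 < r ∧ r ≤ 1 / ((M n : ℝ) + 1) ∧
      ENNReal.ofReal (1 - 1 / ((M n : ℝ) + 1)) * μ (ball u r) ≤ μ (ball u (r - Δ n)) := by
    intro n
    rcases Nat.eq_zero_or_pos (M n) with h0 | hpos
    · refine ⟨1, one_pos, by rw [h0]; norm_num, ?_⟩
      rw [h0]
      norm_num
    · have hN : N0 (M n) ≤ n := by
        have := hMspec n
        simp only [hNdef] at this
        rwa [if_neg (Nat.pos_iff_ne_zero.1 hpos)] at this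
      exact hδ (M n) (Δ n) (hΔpos n) (hN0 (M n) n hN)
  choose r hr0 hrle hrineq using hrex
  have hεtend : Tendsto (fun n => 1 / ((M n : ℝ) + 1)) atTop (𝓝 0) :=
    tendsto_one_div_add_atTop_nhds_zero_nat.comp hMtend
  refine ⟨r, fun n => 1 / ((M n : ℝ) + 1), hr0, ?_, fun n => by positivity, hεtend, hrineq⟩
  exact squeeze_zero (fun n => (hr0 n).le) hrle hεtend
end

section
/- Let (X, d) be a separable metric space, μ a Borel probability measure on X, and u ∈ supp(μ). For every null sequence (Δ_n) of positive reals there exist null sequences (r̃_n) and (ε_n) of positive reals such that for all n, μ(B(u, r̃_n + Δ_n)) ≤ (1 + ε_n) μ(B(u, r̃_n)). -/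
/-! The function `t ↦ μ (B(u, t))` is monotone, hence continuous off a countable set, so every
interval `(0, 1/(m+1))` contains a radius `ρₘ` at which it is continuous. At such a radius
`μ (B(u, ρₘ + Δₙ)) / μ (B(u, ρₘ)) → 1` as `n → ∞`, and a diagonal choice `r̃ₙ = ρ_{φ(n)}` with
`φ(n) → ∞` slowly enough makes the ratio tend to `1` along the diagonal. -/

open MeasureTheory Metric Filter Topology

theorem Filter.exists_tendsto_atTop_eventually_diag {P : ℕ → ℕ → Prop}
    (h : ∀ m, ∀ᶠ n in atTop, P m n) :
    ∃ φ : ℕ → ℕ, Tendsto φ atTop atTop ∧ ∀ᶠ n in atTop, P (φ n) n := by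
  classical
  choose N hN using fun m => eventually_atTop.1 (h m)
  -- `φ n` is the largest `m ≤ n` such that `n` is past all the thresholds `N 0, …, N m`.
  let φ n := Nat.findGreatest (fun m => ∀ k ≤ m, N k ≤ n) n
  refine ⟨φ, tendsto_atTop_atTop.2 fun m => ?_, ?_⟩
  · have hpast : ∀ᶠ n in atTop, ∀ k ∈ Set.Iic m, N k ≤ n :=
      (eventually_all_finite (Set.finite_Iic m)).2 fun k _ => eventually_ge_atTop (N k)
    obtain ⟨n₀, hn₀⟩ := eventually_atTop.1 (hpast.and (eventually_ge_atTop m))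
    exact ⟨n₀, fun n hn => Nat.le_findGreatest (hn₀ n hn).2 (hn₀ n hn).1⟩
  · filter_upwards [eventually_ge_atTop (N 0)] with n hn
    have hφ : ∀ k ≤ φ n, N k ≤ n :=
      Nat.findGreatest_spec (P := fun m => ∀ k ≤ m, N k ≤ n) (Nat.zero_le n)
        fun k hk => (Nat.le_zero.1 hk) ▸ hn
    exact hN _ n (hφ _ le_rfl)

theorem exists_tendsto_atTop_tendsto_diag {α : Type*} [PseudoMetricSpace α]
    {g : ℕ → ℕ → α} {a : α} (hg : ∀ m, Tendsto (g m) atTop (𝓝 a)) :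
    ∃ φ : ℕ → ℕ, Tendsto φ atTop atTop ∧ Tendsto (fun n => g (φ n) n) atTop (𝓝 a) := by
  obtain ⟨φ, hφ, hclose⟩ := exists_tendsto_atTop_eventually_diag (P := fun m n =>
    dist (g m n) a < 1 / ((m : ℝ) + 1))
    fun m => (tendsto_iff_dist_tendsto_zero.1 (hg m)).eventually (gt_mem_nhds (by positivity))
  refine ⟨φ, hφ, tendsto_iff_dist_tendsto_zero.2 <| squeeze_zero' (.of_forall fun _ => dist_nonneg)
    (hclose.mono fun _ => le_of_lt) ?_⟩
  exact tendsto_one_div_add_atTop_nhds_zero_nat.comp hφ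

theorem Monotone.exists_continuousAt_mem_Ioo {F : ℝ → ℝ} (hF : Monotone F) {a b : ℝ}
    (hab : a < b) : ∃ c ∈ Set.Ioo a b, ContinuousAt F c := by
  obtain ⟨c, hc, hac, hcb⟩ := (hF.countable_not_continuousAt.dense_compl ℝ).exists_between hab
  exact ⟨c, ⟨hac, hcb⟩, not_not.1 hc⟩

theorem Monotone.exists_null_seq_le_one_add_mul {F : ℝ → ℝ} (hF : Monotone F)
    (hpos : ∀ t, 0 < t → 0 < F t) {Δ : ℕ → ℝ} (hΔpos : ∀ n, 0 < Δ n)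
    (hΔ : Tendsto Δ atTop (𝓝 0)) :
    ∃ r ε : ℕ → ℝ, (∀ n, 0 < r n) ∧ Tendsto r atTop (𝓝 0) ∧
      (∀ n, 0 < ε n) ∧ Tendsto ε atTop (𝓝 0) ∧ ∀ n, F (r n + Δ n) ≤ (1 + ε n) * F (r n) := by
  choose ρ hρ hρcont using fun m : ℕ =>
    hF.exists_continuousAt_mem_Ioo (one_div_pos.2 (Nat.cast_add_one_pos m))
  have hρ0 : Tendsto ρ atTop (𝓝 0) :=
    squeeze_zero (fun m => (hρ m).1.le) (fun m => (hρ m).2.le)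
      tendsto_one_div_add_atTop_nhds_zero_nat
  have hFρ m : 0 < F (ρ m) := hpos _ (hρ m).1
  set g : ℕ → ℕ → ℝ := fun m n => F (ρ m + Δ n) / F (ρ m)
  have hg_ge m n : 1 ≤ g m n :=
    (one_le_div (hFρ m)).2 (hF (le_add_of_nonneg_right (hΔpos n).le))
  have hg m : Tendsto (g m) atTop (𝓝 1) := by
    have hshift : Tendsto (fun n => ρ m + Δ n) atTop (𝓝 (ρ m)) := by
      simpa using tendsto_const_nhds.add hΔ
    simpa [div_self (hFρ m).ne'] using ((hρcont m).tendsto.comp hshift).div_const (F (ρ m))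
  obtain ⟨φ, hφ, hdiag⟩ := exists_tendsto_atTop_tendsto_diag hg
  -- `Δ n` only serves as a positive slack making `ε n` strictly positive.
  refine ⟨fun n => ρ (φ n), fun n => g (φ n) n - 1 + Δ n, fun n => (hρ _).1, hρ0.comp hφ,
    fun n => by linarith [hg_ge (φ n) n, hΔpos n], ?_, fun n => ?_⟩
  · simpa using (hdiag.sub_const 1).add hΔ
  · calc F (ρ (φ n) + Δ n) = g (φ n) n * F (ρ (φ n)) := (div_mul_cancel₀ _ (hFρ _).ne').symm
      _ ≤ (1 + (g (φ n) n - 1 + Δ n)) * F (ρ (φ n)) := by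
        exact mul_le_mul_of_nonneg_right (by linarith [hΔpos n]) (hFρ _).le

theorem stmt5_general {X : Type*} [MetricSpace X]
    [MeasurableSpace X] (μ : Measure X) [IsProbabilityMeasure μ]
    (u : X) (hu : ∀ r : ℝ, 0 < r → 0 < μ (ball u r))
    (Δ : ℕ → ℝ) (hΔpos : ∀ n, 0 < Δ n) (hΔ : Tendsto Δ atTop (𝓝 0)) :
    ∃ r ε : ℕ → ℝ, (∀ n, 0 < r n) ∧ Tendsto r atTop (𝓝 0) ∧
      (∀ n, 0 < ε n) ∧ Tendsto ε atTop (𝓝 0) ∧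
      ∀ n, μ (ball u (r n + Δ n)) ≤ ENNReal.ofReal (1 + ε n) * μ (ball u (r n)) := by
  have hmono : Monotone fun t => μ.real (ball u t) := fun _ _ hst =>
    measureReal_mono (ball_subset_ball hst)
  have hpos t (ht : 0 < t) : 0 < μ.real (ball u t) :=
    ENNReal.toReal_pos (hu t ht).ne' (measure_ne_top μ _)
  obtain ⟨r, ε, hr, hr0, hε, hε0, hle⟩ := hmono.exists_null_seq_le_one_add_mul hpos hΔpos hΔ
  refine ⟨r, ε, hr, hr0, hε, hε0, fun n => ?_⟩
  rw [← ofReal_measureReal, ← ofReal_measureReal, ← ENNReal.ofReal_mul (by linarith [hε n])]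
  exact ENNReal.ofReal_le_ofReal (hle n)

theorem stmt5 {X : Type*} [MetricSpace X] [TopologicalSpace.SeparableSpace X]
    [MeasurableSpace X] [BorelSpace X] (μ : Measure X) [IsProbabilityMeasure μ]
    (u : X) (hu : ∀ r : ℝ, 0 < r → 0 < μ (ball u r))
    (Δ : ℕ → ℝ) (hΔpos : ∀ n, 0 < Δ n) (hΔ : Tendsto Δ atTop (𝓝 0)) :
    ∃ r ε : ℕ → ℝ, (∀ n, 0 < r n) ∧ Tendsto r atTop (𝓝 0) ∧
      (∀ n, 0 < ε n) ∧ Tendsto ε atTop (𝓝 0) ∧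
      ∀ n, μ (ball u (r n + Δ n)) ≤ ENNReal.ofReal (1 + ε n) * μ (ball u (r n)) :=
  stmt5_general μ u hu Δ hΔpos hΔ
end

section
/- Let (X, d, μ) be a separable metric probability space. A point u ∈ X is a strong mode (i.e. liminf_{r→0} μ(B(u,r))/M_r ≥ 1, where M_r = sup_x μ(B(x,r))) if and only if there exists a sequence u_n → u such that for every null sequence (r_n), liminf_{n→∞} μ(B(u_n, r_n))/M_{r_n} ≥ 1. -/
/-! Suppose the ratio at `u` drops below `b < 1` along radii `ρₖ → 0`. Since
`r ↦ M_r` is continuous from the left, there are `sₖ < ρₖ` with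
`μ (B(u, ρₖ)) ≤ b · M_{sₖ}`. Once `d(uₙ, u) < ρₖ - sₖ`, the ball around `uₙ` of radius
`ρₖ - d(uₙ, u) ≥ sₖ` lies in `B(u, ρₖ)`, so its ratio is at most `b`. Letting `k` grow slowly
with `n` turns these radii into a null sequence along which the liminf at `uₙ` is at most `b`. -/

open MeasureTheory Metric Filter Topology

/-- Ball-mass ratio with the conventions `c/0 = ∞` for `c > 0` and `0/0 = 1`. -/
noncomputable def mRatio (a b : ENNReal) : ENNReal :=
  if b = 0 then (if a = 0 then 1 else ⊤) else a / b

open scoped ENNReal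

lemma mRatio_of_ne_zero (a : ℝ≥0∞) {b : ℝ≥0∞} (hb : b ≠ 0) : mRatio a b = a / b := if_neg hb

theorem Nat.exists_tendsto_atTop_eventually_diagonal {P : ℕ → ℕ → Prop}
    (h : ∀ k, ∀ᶠ n in atTop, P k n) :
    ∃ K : ℕ → ℕ, Tendsto K atTop atTop ∧ ∀ᶠ n in atTop, P (K n) n := by
  classical
  choose N hN using fun k => eventually_atTop.1 (h k)
  refine ⟨fun n => Nat.findGreatest (fun k => N k ≤ n) n, tendsto_atTop.2 fun k => ?_, ?_⟩
  · filter_upwards [eventually_ge_atTop k, eventually_ge_atTop (N k)] with n hkn hNk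
    exact Nat.le_findGreatest hkn hNk
  · filter_upwards [eventually_ge_atTop (N 0)] with n hn
    exact hN _ n (Nat.findGreatest_spec (P := fun k => N k ≤ n) (Nat.zero_le n) hn)

section BallMeasure

variable {X : Type*} [PseudoMetricSpace X] [MeasurableSpace X] (μ : Measure X)

lemma iSup_measure_ball_ne_top [IsFiniteMeasure μ] (r : ℝ) : ⨆ x : X, μ (ball x r) ≠ ∞ :=
  ne_top_of_le_ne_top (measure_ne_top μ Set.univ)
    (iSup_le fun _ => measure_mono (Set.subset_univ _))

lemma iSup_measure_ball_pos [HereditarilyLindelofSpace X] [NeZero μ] {r : ℝ} (hr : 0 < r) :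
    0 < ⨆ x : X, μ (ball x r) := by
  obtain ⟨x, hx⟩ := μ.nonempty_support (NeZero.ne μ)
  exact ((Measure.mem_support_iff_forall x).1 hx _ (ball_mem_nhds x hr)).trans_le
    (le_iSup (fun y => μ (ball y r)) x)

lemma exists_lt_measure_ball_of_lt {x : X} {ρ : ℝ} {c : ℝ≥0∞} (hc : c < μ (ball x ρ)) :
    ∃ s ∈ Set.Ioo 0 ρ, c < μ (ball x s) := by
  have hmono : Monotone fun n : ℕ => ball x (ρ - 1 / (n + 1)) := fun m n hmn =>
    ball_subset_ball (by gcongr)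
  have hunion : ⋃ n : ℕ, ball x (ρ - 1 / (n + 1)) = ball x ρ := by
    ext y
    simp only [Set.mem_iUnion, mem_ball]
    refine ⟨fun ⟨n, hn⟩ => hn.trans_le (sub_le_self _ Nat.one_div_pos_of_nat.le), fun hy => ?_⟩
    obtain ⟨n, hn⟩ := exists_nat_one_div_lt (sub_pos.2 hy)
    exact ⟨n, by linarith⟩
  obtain ⟨n, hn⟩ :=
    ((tendsto_order.1 (tendsto_measure_iUnion_atTop (μ := μ) hmono)).1 c (hunion ▸ hc)).exists
  have hpos : 0 < ρ - 1 / (n + 1) :=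
    nonempty_ball.1 (nonempty_of_measure_ne_zero (ne_bot_of_gt hn))
  exact ⟨_, ⟨hpos, sub_lt_self _ Nat.one_div_pos_of_nat⟩, hn⟩

lemma exists_lt_iSup_measure_ball_of_lt {ρ : ℝ} {c : ℝ≥0∞} (hc : c < ⨆ x : X, μ (ball x ρ)) :
    ∃ s ∈ Set.Ioo 0 ρ, c < ⨆ x : X, μ (ball x s) := by
  obtain ⟨x, hx⟩ := lt_iSup_iff.1 hc
  obtain ⟨s, hs, hxs⟩ := exists_lt_measure_ball_of_lt μ hx
  exact ⟨s, hs, hxs.trans_le (le_iSup (fun y => μ (ball y s)) x)⟩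

variable [HereditarilyLindelofSpace X] [NeZero μ]

lemma mRatio_measure_ball_le {u v : X} {ρ s r : ℝ} {b : ℝ≥0∞} (hr : 0 < r)
    (hsub : ball v r ⊆ ball u ρ) (hsr : s ≤ r) (hs : μ (ball u ρ) ≤ b * ⨆ x : X, μ (ball x s)) :
    mRatio (μ (ball v r)) (⨆ x : X, μ (ball x r)) ≤ b := by
  rw [mRatio_of_ne_zero _ (iSup_measure_ball_pos μ hr).ne']
  refine ENNReal.div_le_of_le_mul ((measure_mono hsub).trans (hs.trans ?_))
  gcongr

variable [IsFiniteMeasure μ]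

lemma exists_measure_ball_le_mul_iSup_of_mRatio_lt {u : X} {ρ : ℝ} {b : ℝ≥0∞} (hρ : 0 < ρ)
    (hb : b ≠ 0) (h : mRatio (μ (ball u ρ)) (⨆ x : X, μ (ball x ρ)) < b) :
    ∃ s ∈ Set.Ioo 0 ρ, μ (ball u ρ) ≤ b * ⨆ x : X, μ (ball x s) := by
  have hM := (iSup_measure_ball_pos μ hρ).ne'
  have hfin : b ≠ ∞ ∨ μ (ball u ρ) ≠ ∞ := Or.inr (measure_ne_top μ _)
  rw [mRatio_of_ne_zero _ hM,
    ENNReal.div_lt_iff (Or.inl hM) (Or.inl (iSup_measure_ball_ne_top μ ρ)), mul_comm,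
    ← ENNReal.div_lt_iff (Or.inl hb) hfin] at h
  obtain ⟨s, hs, hlt⟩ := exists_lt_iSup_measure_ball_of_lt μ h
  exact ⟨s, hs, mul_comm b _ ▸ ((ENNReal.div_lt_iff (Or.inl hb) hfin).1 hlt).le⟩

theorem exists_radii_liminf_mRatio_lt_one {u : X} {us : ℕ → X} (hus : Tendsto us atTop (𝓝 u))
    (hu : liminf (fun r => mRatio (μ (ball u r)) (⨆ x : X, μ (ball x r))) (𝓝[>] 0) < 1) :
    ∃ r : ℕ → ℝ, (∀ n, 0 < r n) ∧ Tendsto r atTop (𝓝 0) ∧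
      liminf (fun n => mRatio (μ (ball (us n) (r n))) (⨆ x : X, μ (ball x (r n)))) atTop < 1 := by
  obtain ⟨b, hub, hb1⟩ := exists_between hu
  obtain ⟨ρ, hρ0, hρb⟩ := exists_seq_forall_of_frequently
    ((frequently_lt_of_liminf_lt (by isBoundedDefault) hub).and_eventually self_mem_nhdsWithin)
  choose s hs hsb using fun k =>
    exists_measure_ball_le_mul_iSup_of_mRatio_lt μ (hρb k).2 (ne_bot_of_gt hub) (hρb k).1
  have hclose : ∀ k, ∀ᶠ n in atTop, dist (us n) u < ρ k - s k := fun k =>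
    (tendsto_order.1 (tendsto_iff_dist_tendsto_zero.1 hus)).2 _ (sub_pos.2 (hs k).2)
  obtain ⟨K, hK, hKclose⟩ := Nat.exists_tendsto_atTop_eventually_diagonal hclose
  have hρK : Tendsto (fun n => ρ (K n)) atTop (𝓝 0) :=
    (tendsto_nhdsWithin_iff.1 hρ0).1.comp hK
  have hsK : Tendsto (fun n => s (K n)) atTop (𝓝 0) :=
    tendsto_of_tendsto_of_tendsto_of_le_of_le tendsto_const_nhds hρK
      (fun n => (hs (K n)).1.le) (fun n => (hs (K n)).2.le)
  -- `r n` keeps `ball (us n) (r n)` inside the bad ball `ball u (ρ (K n))` while `s (K n) ≤ r n`.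
  refine ⟨fun n => max (ρ (K n) - dist (us n) u) (s (K n)),
    fun n => lt_max_of_lt_right (hs (K n)).1, ?_, ?_⟩
  · simpa using (hρK.sub (tendsto_iff_dist_tendsto_zero.1 hus)).max hsK
  refine (liminf_le_of_frequently_le (Eventually.frequently ?_)).trans_lt hb1
  filter_upwards [hKclose] with n hn
  rw [max_eq_left (by linarith)]
  exact mRatio_measure_ball_le μ (by linarith [(hs (K n)).1]) (ball_subset_ball' (by linarith))
    (by linarith) (hsb (K n))

end BallMeasure

theorem stmt6_general {X : Type*} [MetricSpace X] [TopologicalSpace.SeparableSpace X]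
    [MeasurableSpace X] (μ : Measure X) [IsProbabilityMeasure μ]
    (u : X) :
    (1 ≤ Filter.liminf
        (fun r : ℝ => mRatio (μ (ball u r)) (⨆ x : X, μ (ball x r))) (𝓝[>] (0:ℝ)))
    ↔ ∃ us : ℕ → X, Tendsto us atTop (𝓝 u) ∧
        ∀ r : ℕ → ℝ, (∀ n, 0 < r n) → Tendsto r atTop (𝓝 0) →
          1 ≤ Filter.liminf
            (fun n => mRatio (μ (ball (us n) (r n))) (⨆ x : X, μ (ball x (r n)))) atTop := by
  constructor
  · intro hu
    refine ⟨fun _ => u, tendsto_const_nhds, fun r hr hr0 => hu.trans ?_⟩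
    exact (tendsto_nhdsWithin_iff.2 ⟨hr0, .of_forall hr⟩).liminf_le_liminf_comp
  · rintro ⟨us, hus, hradii⟩
    by_contra! hu
    obtain ⟨r, hr, hr0, hlt⟩ := exists_radii_liminf_mRatio_lt_one μ hus hu
    exact (hradii r hr hr0).not_gt hlt

theorem stmt6 {X : Type*} [MetricSpace X] [TopologicalSpace.SeparableSpace X]
    [MeasurableSpace X] [BorelSpace X] (μ : Measure X) [IsProbabilityMeasure μ]
    (u : X) :
    (1 ≤ Filter.liminf
        (fun r : ℝ => mRatio (μ (ball u r)) (⨆ x : X, μ (ball x r))) (𝓝[>] (0:ℝ)))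
    ↔ ∃ us : ℕ → X, Tendsto us atTop (𝓝 u) ∧
        ∀ r : ℕ → ℝ, (∀ n, 0 < r n) → Tendsto r atTop (𝓝 0) →
          1 ≤ Filter.liminf
            (fun n => mRatio (μ (ball (us n) (r n))) (⨆ x : X, μ (ball x (r n)))) atTop :=
  stmt6_general μ u
end

section
/- Let (X, d, μ) be a separable metric probability space. A point u ∈ X is a weak mode (for every null sequence (r_n) and every v ≠ u, liminf_{n→∞} μ(B(u,r_n))/μ(B(v,r_n)) ≥ 1) if and only if for every v ≠ u there exist sequences u_n → u and v_n → v such that for every null sequence (r_n), liminf_{n→∞} μ(B(u_n,r_n))/μ(B(v_n,r_n)) ≥ 1. -/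
/-!
If the ratio at `(u, v, r)` is below `c < 1`, then `μ (ball v r) ≠ 0`, and by continuity of
the measure from below we may shrink the radius to `r - 2δ` while keeping a fraction `θ < 1`
of that mass. Any `u' ∈ B(u, δ)` and `v' ∈ B(v, δ)` then satisfy
`B(u', r - δ) ⊆ B(u, r)` and `B(v, r - 2δ) ⊆ B(v', r - δ)`, so their ratio at radius `r - δ`
is at most `c / θ < 1`. Doing this along a subsequence of radii witnessing `liminf < 1`, with
`u', v'` taken from the approximating sequences, produces a null sequence of radii along which
the approximating ratio has `liminf < 1`.
-/

open MeasureTheory Metric Filter Topology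
open scoped ENNReal

lemma ne_zero_and_lt_mul_of_mRatio_lt {a b c : ℝ≥0∞} (hbtop : b ≠ ⊤) (hc : c ≤ 1)
    (h : mRatio a b < c) : b ≠ 0 ∧ a < c * b := by
  unfold mRatio at h
  split_ifs at h with hb
  · exact absurd (h.trans_le hc) (lt_irrefl 1)
  · exact absurd h (not_lt.2 le_top)
  · exact ⟨hb, (ENNReal.div_lt_iff (.inl hb) (.inl hbtop)).1 h⟩

lemma mRatio_le_div {a b b' c θ : ℝ≥0∞} (ha : a ≤ c * b) (hb : θ * b ≤ b') (hb0 : b ≠ 0)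
    (hbtop : b ≠ ⊤) (hθ : θ ≠ 0) : mRatio a b' ≤ c / θ := by
  have hb' : b' ≠ 0 := ne_bot_of_le_ne_bot (mul_ne_zero hθ hb0) hb
  calc mRatio a b' = a / b' := if_neg hb'
    _ ≤ c * b / (θ * b) := ENNReal.div_le_div ha hb
    _ = c / θ := ENNReal.mul_div_mul_right _ _ hb0 hbtop

lemma exists_lt_measure_ball_of_lt_s8 {X : Type*} [PseudoMetricSpace X] [MeasurableSpace X]
    (μ : Measure X) (v : X) {r : ℝ} {a : ℝ≥0∞} (h : a < μ (ball v r)) :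
    ∃ s < r, a < μ (ball v s) := by
  obtain ⟨t, ht_mono, ht_lt, ht_lim⟩ := exists_seq_strictMono_tendsto r
  have hunion : ⋃ n, ball v (t n) = ball v r := by
    ext x
    simp only [Set.mem_iUnion, mem_ball]
    exact ⟨fun ⟨n, hn⟩ => hn.trans (ht_lt n), fun hx => (ht_lim.eventually (lt_mem_nhds hx)).exists⟩
  have hmeas := tendsto_measure_iUnion_atTop (μ := μ)
    (fun _ _ hnm => ball_subset_ball (ht_mono.monotone hnm) : Monotone fun n => ball v (t n))
  rw [hunion] at hmeas
  obtain ⟨n, hn⟩ := (hmeas.eventually (lt_mem_nhds h)).exists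
  exact ⟨t n, ht_lt n, hn⟩

lemma exists_mRatio_ball_le_div {X : Type*} [PseudoMetricSpace X] [MeasurableSpace X]
    (μ : Measure X) [IsFiniteMeasure μ] {u v : X} {r : ℝ} {c θ : ℝ≥0∞} (hc : c ≤ 1)
    (hθ0 : θ ≠ 0) (hθ1 : θ < 1) (h : mRatio (μ (ball u r)) (μ (ball v r)) < c) :
    ∃ δ, 0 < δ ∧ δ < r ∧ ∀ u' v', dist u' u < δ → dist v' v < δ →
      mRatio (μ (ball u' (r - δ))) (μ (ball v' (r - δ))) ≤ c / θ := by
  obtain ⟨hb0, hab⟩ := ne_zero_and_lt_mul_of_mRatio_lt (measure_ne_top μ _) hc h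
  have hθb : θ * μ (ball v r) < μ (ball v r) := by
    simpa using ENNReal.mul_lt_mul_left hb0 (measure_ne_top μ _) hθ1
  obtain ⟨s, hsr, hs⟩ := exists_lt_measure_ball_of_lt_s8 μ v hθb
  have hs0 : 0 < s := nonempty_ball.1 (nonempty_of_measure_ne_zero (ne_bot_of_gt hs))
  refine ⟨(r - s) / 2, by linarith, by linarith, fun u' v' hu hv =>
    mRatio_le_div ?_ ?_ hb0 (measure_ne_top μ _) hθ0⟩
  · exact (measure_mono (ball_subset_ball' (by linarith))).trans hab.le
  · exact hs.le.trans (measure_mono (ball_subset_ball' (by rw [dist_comm]; linarith)))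

lemma tendsto_extend_atTop {α : Type*} {ψ : ℕ → ℕ} (hψ : StrictMono ψ) {s g : ℕ → α}
    {l : Filter α} (hs : Tendsto s atTop l) (hg : Tendsto g atTop l) :
    Tendsto (Function.extend ψ s g) atTop l := by
  rw [Filter.tendsto_atTop'] at hs hg ⊢
  intro t ht
  obtain ⟨K, hK⟩ := hs t ht
  obtain ⟨M, hM⟩ := hg t ht
  refine ⟨max (ψ K) M, fun m hm => ?_⟩
  by_cases h : ∃ k, ψ k = m
  · obtain ⟨k, rfl⟩ := h
    rw [hψ.injective.extend_apply]
    exact hK k (hψ.le_iff_le.1 (le_of_max_le_left hm))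
  · rw [Function.extend_apply' _ _ _ h]
    exact hM m (le_of_max_le_right hm)

lemma exists_pos_tendsto_zero_comp_eq {ψ : ℕ → ℕ} (hψ : StrictMono ψ) {s : ℕ → ℝ}
    (hs_pos : ∀ k, 0 < s k) (hs : Tendsto s atTop (𝓝 0)) :
    ∃ ρ : ℕ → ℝ, (∀ n, 0 < ρ n) ∧ Tendsto ρ atTop (𝓝 0) ∧ ∀ k, ρ (ψ k) = s k := by
  refine ⟨Function.extend ψ s fun m => 1 / (m + 1), fun m => ?_,
    tendsto_extend_atTop hψ hs tendsto_one_div_add_atTop_nhds_zero_nat,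
    hψ.injective.extend_apply _ _⟩
  by_cases h : ∃ k, ψ k = m
  · obtain ⟨k, rfl⟩ := h
    rw [hψ.injective.extend_apply]
    exact hs_pos k
  · rw [Function.extend_apply' _ _ _ h]
    positivity

lemma one_le_liminf_mRatio_ball_of_tendsto {X : Type*} [PseudoMetricSpace X]
    [MeasurableSpace X] (μ : Measure X) [IsFiniteMeasure μ] {u v : X} {us vs : ℕ → X}
    (hus : Tendsto us atTop (𝓝 u)) (hvs : Tendsto vs atTop (𝓝 v))
    (H : ∀ ρ : ℕ → ℝ, (∀ n, 0 < ρ n) → Tendsto ρ atTop (𝓝 0) →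
      1 ≤ liminf (fun n => mRatio (μ (ball (us n) (ρ n))) (μ (ball (vs n) (ρ n)))) atTop)
    {r : ℕ → ℝ} (hr : Tendsto r atTop (𝓝 0)) :
    1 ≤ liminf (fun n => mRatio (μ (ball u (r n))) (μ (ball v (r n)))) atTop := by
  by_contra! hlt
  obtain ⟨c, hLc, hc1⟩ := exists_between hlt
  obtain ⟨θ, hcθ, hθ1⟩ := exists_between hc1
  have hθ0 : θ ≠ 0 := ne_bot_of_gt hcθ
  obtain ⟨φ, hφ, hφc⟩ :=
    extraction_of_frequently_atTop (frequently_lt_of_liminf_lt (by isBoundedDefault) hLc)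
  choose δ hδ0 hδr hδ using fun k => exists_mRatio_ball_le_div μ hc1.le hθ0 hθ1 (hφc k)
  obtain ⟨ψ, hψ, hψδ⟩ := extraction_forall_of_eventually fun k =>
    (hus.eventually (ball_mem_nhds u (hδ0 k))).and (hvs.eventually (ball_mem_nhds v (hδ0 k)))
  have hs : Tendsto (fun k => r (φ k) - δ k) atTop (𝓝 0) :=
    squeeze_zero (fun k => (sub_pos.2 (hδr k)).le) (fun k => sub_le_self _ (hδ0 k).le)
      (hr.comp hφ.tendsto_atTop)
  obtain ⟨ρ, hρ_pos, hρ, hρψ⟩ := exists_pos_tendsto_zero_comp_eq hψ (fun k => sub_pos.2 (hδr k)) hs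
  have hle : ∃ᶠ m in atTop, mRatio (μ (ball (us m) (ρ m))) (μ (ball (vs m) (ρ m))) ≤ c / θ :=
    hψ.tendsto_atTop.frequently <| .of_forall fun k => by
      rw [hρψ k]
      exact hδ k _ _ (hψδ k).1 (hψδ k).2
  have hcθ1 : c / θ < 1 := by
    rwa [ENNReal.div_lt_iff (.inl hθ0) (.inl hθ1.ne_top), one_mul]
  exact ((H ρ hρ_pos hρ).trans (liminf_le_of_frequently_le hle)).not_gt hcθ1

theorem stmt8_general {X : Type*} [MetricSpace X]
    [MeasurableSpace X] (μ : Measure X) [IsProbabilityMeasure μ]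
    (u : X) :
    (∀ r : ℕ → ℝ, (∀ n, 0 < r n) → Tendsto r atTop (𝓝 0) →
        ∀ v : X, v ≠ u →
          1 ≤ Filter.liminf
            (fun n => mRatio (μ (ball u (r n))) (μ (ball v (r n)))) atTop)
    ↔ ∀ v : X, v ≠ u →
        ∃ us vs : ℕ → X, Tendsto us atTop (𝓝 u) ∧ Tendsto vs atTop (𝓝 v) ∧
          ∀ r : ℕ → ℝ, (∀ n, 0 < r n) → Tendsto r atTop (𝓝 0) →
            1 ≤ Filter.liminf
              (fun n => mRatio (μ (ball (us n) (r n))) (μ (ball (vs n) (r n)))) atTop := by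
  refine ⟨fun H v hv => ⟨fun _ => u, fun _ => v, tendsto_const_nhds, tendsto_const_nhds,
    fun r hr_pos hr => H r hr_pos hr v hv⟩, fun H r _ hr v hv => ?_⟩
  obtain ⟨us, vs, hus, hvs, Hus⟩ := H v hv
  exact one_le_liminf_mRatio_ball_of_tendsto μ hus hvs Hus hr

theorem stmt8 {X : Type*} [MetricSpace X] [TopologicalSpace.SeparableSpace X]
    [MeasurableSpace X] [BorelSpace X] (μ : Measure X) [IsProbabilityMeasure μ]
    (u : X) :
    (∀ r : ℕ → ℝ, (∀ n, 0 < r n) → Tendsto r atTop (𝓝 0) →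
        ∀ v : X, v ≠ u →
          1 ≤ Filter.liminf
            (fun n => mRatio (μ (ball u (r n))) (μ (ball v (r n)))) atTop)
    ↔ ∀ v : X, v ≠ u →
        ∃ us vs : ℕ → X, Tendsto us atTop (𝓝 u) ∧ Tendsto vs atTop (𝓝 v) ∧
          ∀ r : ℕ → ℝ, (∀ n, 0 < r n) → Tendsto r atTop (𝓝 0) →
            1 ≤ Filter.liminf
              (fun n => mRatio (μ (ball (us n) (r n))) (μ (ball (vs n) (r n)))) atTop :=
  stmt8_general μ u
end

section
/- Strong–weak dichotomy: let (X, d, μ) be a separable metric probability space and suppose there exists a strong mode v, i.e. liminf_{r→0} μ(B(v,r))/M_r ≥ 1 where M_r = sup_x μ(B(x,r)). Then every weak mode u (i.e. liminf_{r→0} μ(B(u,r))/μ(B(w,r)) ≥ 1 for all w ≠ u) is itself a strong mode. -/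
open MeasureTheory Metric Filter Topology

open scoped ENNReal

/-!
If `v` is a strong mode and `u ≠ v` a weak mode, multiply the ratios:
`μ(B(u,r))/μ(B(v,r)) · μ(B(v,r))/M_r ≤ μ(B(u,r))/M_r`, and take `liminf`s.
The chain rule for ratios only needs `M_r ≠ 0`, which holds for every `r > 0`
because countably many balls of radius `r` cover a separable space.
-/

/-- When `b = 0` the left side is `mRatio a 0 * 0 = 0` (also for `mRatio a 0 = ∞`). -/
lemma mRatio_mul_mRatio_le (a : ℝ≥0∞) {b c : ℝ≥0∞} (hc : c ≠ 0) (hb : b ≠ ⊤) :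
    mRatio a b * mRatio b c ≤ mRatio a c := by
  simp only [mRatio, if_neg hc]
  by_cases hb0 : b = 0
  · simp [hb0]
  · rw [if_neg hb0, ← mul_div_assoc, ENNReal.div_mul_cancel hb0 hb]

lemma liminf_mRatio_mul_le {α : Type*} {l : Filter α} (a : α → ℝ≥0∞) {b c : α → ℝ≥0∞}
    (hc : ∀ᶠ x in l, c x ≠ 0) (hb : ∀ᶠ x in l, b x ≠ ⊤) :
    liminf (fun x => mRatio (a x) (b x)) l * liminf (fun x => mRatio (b x) (c x)) l ≤
      liminf (fun x => mRatio (a x) (c x)) l := by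
  refine ENNReal.le_liminf_mul.trans (liminf_le_liminf ?_)
  filter_upwards [hc, hb] with x hcx hbx
  exact mRatio_mul_mRatio_le _ hcx hbx

lemma iSup_measure_ball_ne_zero {X : Type*} [PseudoMetricSpace X]
    [TopologicalSpace.SeparableSpace X] [MeasurableSpace X] (μ : Measure X) [NeZero μ]
    {r : ℝ} (hr : 0 < r) : ⨆ x : X, μ (ball x r) ≠ 0 := by
  intro h
  obtain ⟨s, hs_count, hs_dense⟩ := TopologicalSpace.exists_countable_dense X
  apply NeZero.ne μ
  rw [← Measure.measure_univ_eq_zero, ← (dense_iff_iUnion_ball s).1 hs_dense r hr,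
    measure_biUnion_null_iff hs_count]
  exact fun x _ => ENNReal.iSup_eq_zero.1 h x

theorem stmt9_general {X : Type*} [MetricSpace X] [TopologicalSpace.SeparableSpace X]
    [MeasurableSpace X] (μ : Measure X) [IsProbabilityMeasure μ]
    (u v : X)
    (hv : 1 ≤ Filter.liminf
        (fun r : ℝ => mRatio (μ (ball v r)) (⨆ x : X, μ (ball x r))) (𝓝[>] (0:ℝ)))
    (hu : ∀ w : X, w ≠ u →
        1 ≤ Filter.liminf
          (fun r : ℝ => mRatio (μ (ball u r)) (μ (ball w r))) (𝓝[>] (0:ℝ))) :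
    1 ≤ Filter.liminf
      (fun r : ℝ => mRatio (μ (ball u r)) (⨆ x : X, μ (ball x r))) (𝓝[>] (0:ℝ)) := by
  obtain rfl | hvu := eq_or_ne v u
  · exact hv
  calc (1 : ℝ≥0∞) = 1 * 1 := (one_mul 1).symm
    _ ≤ _ := mul_le_mul' (hu v hvu) hv
    _ ≤ _ := liminf_mRatio_mul_le _
      (eventually_nhdsWithin_of_forall fun _ hr => iSup_measure_ball_ne_zero μ hr)
      (.of_forall fun _ => measure_ne_top μ _)

theorem stmt9 {X : Type*} [MetricSpace X] [TopologicalSpace.SeparableSpace X]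
    [MeasurableSpace X] [BorelSpace X] (μ : Measure X) [IsProbabilityMeasure μ]
    (u v : X)
    (hv : 1 ≤ Filter.liminf
        (fun r : ℝ => mRatio (μ (ball v r)) (⨆ x : X, μ (ball x r))) (𝓝[>] (0:ℝ)))
    (hu : ∀ w : X, w ≠ u →
        1 ≤ Filter.liminf
          (fun r : ℝ => mRatio (μ (ball u r)) (μ (ball w r))) (𝓝[>] (0:ℝ))) :
    1 ≤ Filter.liminf
      (fun r : ℝ => mRatio (μ (ball u r)) (⨆ x : X, μ (ball x r))) (𝓝[>] (0:ℝ)) :=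
  stmt9_general μ u v hv hu
end

section
/- Support property for weak modes: let (X, d, μ) be a separable metric probability space and let u ∈ X be a weak mode, i.e. for every v ≠ u, liminf_{r→0} μ(B(u,r))/μ(B(v,r)) ≥ 1 (with conventions c/0 = ∞ for c > 0 and 0/0 = 1). Then u ∈ supp(μ). -/
open MeasureTheory Metric Filter Topology

theorem mRatio_zero_left {b : ENNReal} (hb : b ≠ 0) : mRatio 0 b = 0 := by
  simp [mRatio, hb]

section Metric

variable {X : Type*} [MetricSpace X] [MeasurableSpace X] {μ : Measure X}

theorem Measure.mem_support_iff_forall_measure_ball_pos {x : X} :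
    x ∈ μ.support ↔ ∀ r : ℝ, 0 < r → 0 < μ (ball x r) :=
  nhds_basis_ball.mem_measureSupport

theorem liminf_mRatio_measure_ball_eq_zero {u v : X} (hu : u ∉ μ.support) (hv : v ∈ μ.support) :
    liminf (fun r : ℝ => mRatio (μ (ball u r)) (μ (ball v r))) (𝓝[>] 0) = 0 := by
  obtain ⟨r, hr, hur⟩ := nhds_basis_ball.notMem_measureSupport.1 hu
  have hzero : ∀ᶠ s in 𝓝[>] (0 : ℝ), mRatio (μ (ball u s)) (μ (ball v s)) = 0 := by
    filter_upwards [Ioo_mem_nhdsGT hr] with s hs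
    rw [measure_mono_null (ball_subset_ball hs.2.le) hur]
    exact mRatio_zero_left (Measure.mem_support_iff_forall_measure_ball_pos.1 hv s hs.1).ne'
  rw [liminf_congr hzero, liminf_const]

end Metric

theorem stmt11_general {X : Type*} [MetricSpace X] [TopologicalSpace.SeparableSpace X]
    [MeasurableSpace X] (μ : Measure X) [IsProbabilityMeasure μ]
    (u : X)
    (hu : ∀ v : X, v ≠ u →
        1 ≤ Filter.liminf
          (fun r : ℝ => mRatio (μ (ball u r)) (μ (ball v r))) (𝓝[>] (0:ℝ))) :
    ∀ r : ℝ, 0 < r → 0 < μ (ball u r) := by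
  have : SecondCountableTopology X := UniformSpace.secondCountable_of_separable X
  rw [← Measure.mem_support_iff_forall_measure_ball_pos]
  by_contra hu_supp
  obtain ⟨v, hv⟩ := Measure.nonempty_support (IsProbabilityMeasure.ne_zero μ)
  have hvu : v ≠ u := by
    rintro rfl
    exact hu_supp hv
  simpa [liminf_mRatio_measure_ball_eq_zero hu_supp hv] using hu v hvu

theorem stmt11 {X : Type*} [MetricSpace X] [TopologicalSpace.SeparableSpace X]
    [MeasurableSpace X] [BorelSpace X] (μ : Measure X) [IsProbabilityMeasure μ]
    (u : X)
    (hu : ∀ v : X, v ≠ u →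
        1 ≤ Filter.liminf
          (fun r : ℝ => mRatio (μ (ball u r)) (μ (ball v r))) (𝓝[>] (0:ℝ))) :
    ∀ r : ℝ, 0 < r → 0 < μ (ball u r) :=
  stmt11_general μ u hu
end

section
/- Let (X, d, μ) be a separable metric probability space that admits an Onsager–Machlup functional I : E → ℝ on a nonempty subset E ⊆ X, meaning lim_{r→0} μ(B(u,r))/μ(B(v,r)) = exp(I(v) − I(u)) for all u, v ∈ E, and satisfying property M: for all u ∈ E and w ∉ E, lim_{r→0} μ(B(w,r))/μ(B(u,r)) = 0. Then a point u ∈ X is a weak mode of μ if and only if u ∈ E and u minimises I over E. -/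
open MeasureTheory Metric Filter Topology

lemma mRatio_flip {a b : ENNReal} (ha : a ≠ ⊤) (hb : b ≠ ⊤)
    (h : mRatio a b < 1) : 1 ≤ mRatio b a := by
  unfold mRatio at *
  by_cases hb0 : b = 0
  · rw [if_pos hb0] at h
    split_ifs at h <;> simp_all
  · rw [if_neg hb0] at h
    by_cases ha0 : a = 0
    · simp [ha0, hb0]
    · rw [if_neg ha0]
      have hab : a ≤ b := by
        by_contra hba
        push_neg at hba
        have h1 : (1:ENNReal) ≤ a / b :=
          (ENNReal.le_div_iff_mul_le (Or.inl hb0) (Or.inl hb)).mpr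
            (by simpa using hba.le)
        exact absurd h (not_lt.mpr h1)
      exact (ENNReal.le_div_iff_mul_le (Or.inl ha0) (Or.inl ha)).mpr (by simpa using hab)

theorem stmt12 {X : Type*} [MetricSpace X] [TopologicalSpace.SeparableSpace X]
    [MeasurableSpace X] [BorelSpace X] (μ : Measure X) [IsProbabilityMeasure μ]
    (E : Set X) (hE : E.Nonempty) (I : X → ℝ)
    (hOM : ∀ u ∈ E, ∀ v ∈ E,
      Tendsto (fun r : ℝ => mRatio (μ (ball u r)) (μ (ball v r))) (𝓝[>] (0:ℝ))
        (𝓝 (ENNReal.ofReal (Real.exp (I v - I u)))))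
    (hM : ∀ u ∈ E, ∀ w ∉ E,
      Tendsto (fun r : ℝ => mRatio (μ (ball w r)) (μ (ball u r))) (𝓝[>] (0:ℝ)) (𝓝 0))
    (u : X) :
    (∀ v : X, v ≠ u →
        1 ≤ Filter.liminf
          (fun r : ℝ => mRatio (μ (ball u r)) (μ (ball v r))) (𝓝[>] (0:ℝ)))
    ↔ (u ∈ E ∧ ∀ v ∈ E, I u ≤ I v) := by
  constructor
  · intro h
    have huE : u ∈ E := by
      by_contra hu
      obtain ⟨v, hv⟩ := hE
      have hvu : v ≠ u := fun e => hu (e ▸ hv)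
      have hl := (hM v hv u hu).liminf_eq
      have h1 := h v hvu
      rw [hl] at h1
      simp at h1
    refine ⟨huE, fun v hv => ?_⟩
    rcases eq_or_ne v u with rfl | hvu
    · exact le_refl _
    · have hl := (hOM u huE v hv).liminf_eq
      have h1 := h v hvu
      rw [hl] at h1
      have h2 : (1:ℝ) ≤ Real.exp (I v - I u) := by
        by_contra hlt
        push_neg at hlt
        have := ENNReal.ofReal_lt_one.mpr hlt
        exact absurd h1 (not_le.mpr this)
      have := Real.one_le_exp_iff.mp h2
      linarith
  · rintro ⟨huE, hmin⟩ v hvu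
    by_cases hv : v ∈ E
    · rw [(hOM u huE v hv).liminf_eq]
      exact ENNReal.one_le_ofReal.mpr (Real.one_le_exp (by linarith [hmin v hv]))
    · have h0 := hM u huE v hv
      have hev : ∀ᶠ r in 𝓝[>] (0:ℝ),
          mRatio (μ (ball v r)) (μ (ball u r)) < 1 :=
        h0.eventually_lt_const one_pos
      have hev2 : ∀ᶠ r in 𝓝[>] (0:ℝ),
          (1:ENNReal) ≤ mRatio (μ (ball u r)) (μ (ball v r)) :=
        hev.mono fun r hr => mRatio_flip (measure_ne_top μ _) (measure_ne_top μ _) hr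
      exact le_liminf_of_le (by isBoundedDefault) hev2
end

section
/- Let (X, d, μ) be a separable metric probability space admitting an exhaustive Onsager–Machlup functional I : E → ℝ (i.e. lim_{r→0} μ(B(u,r))/μ(B(v,r)) = exp(I(v) − I(u)) for u, v ∈ E, and lim_{r→0} μ(B(w,r))/μ(B(u,r)) = 0 for u ∈ E, w ∉ E). Suppose u ∈ X satisfies: for every v ≠ u there exists a null sequence (r_n) (possibly depending on v) with liminf_{n→∞} μ(B(u,r_n))/μ(B(v,r_n)) ≥ 1. Then u is a weak mode: for every v ≠ u and every null sequence (r_n), liminf_{n→∞} μ(B(u,r_n))/μ(B(v,r_n)) ≥ 1. -/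
open MeasureTheory Metric Filter Topology

lemma mRatio_inv (a b : ENNReal) (ha : a ≠ ⊤) : mRatio a b = (mRatio b a)⁻¹ := by
  unfold mRatio
  rcases eq_or_ne a 0 with h0 | h0 <;> rcases eq_or_ne b 0 with h1 | h1 <;>
    simp [h0, h1]
  exact (ENNReal.inv_div (Or.inl ha) (Or.inl h0)).symm

theorem stmt13 {X : Type*} [MetricSpace X] [TopologicalSpace.SeparableSpace X]
    [MeasurableSpace X] [BorelSpace X] (μ : Measure X) [IsProbabilityMeasure μ]
    (E : Set X) (hE : E.Nonempty) (I : X → ℝ)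
    (hOM : ∀ u ∈ E, ∀ v ∈ E,
      Tendsto (fun r : ℝ => mRatio (μ (ball u r)) (μ (ball v r))) (𝓝[>] (0:ℝ))
        (𝓝 (ENNReal.ofReal (Real.exp (I v - I u)))))
    (hM : ∀ u ∈ E, ∀ w ∉ E,
      Tendsto (fun r : ℝ => mRatio (μ (ball w r)) (μ (ball u r))) (𝓝[>] (0:ℝ)) (𝓝 0))
    (u : X)
    (hwp : ∀ v : X, v ≠ u →
      ∃ r : ℕ → ℝ, (∀ n, 0 < r n) ∧ Tendsto r atTop (𝓝 0) ∧
        1 ≤ Filter.liminf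
          (fun n => mRatio (μ (ball u (r n))) (μ (ball v (r n)))) atTop) :
    ∀ v : X, v ≠ u → ∀ r : ℕ → ℝ, (∀ n, 0 < r n) → Tendsto r atTop (𝓝 0) →
      1 ≤ Filter.liminf
        (fun n => mRatio (μ (ball u (r n))) (μ (ball v (r n)))) atTop := by
  have key : ∀ (s : ℕ → ℝ), (∀ n, 0 < s n) → Tendsto s atTop (𝓝 0) →
      Tendsto s atTop (𝓝[>] (0:ℝ)) := fun s hp h =>
    tendsto_nhdsWithin_of_tendsto_nhds_of_eventually_within s h
      (Eventually.of_forall fun n => hp n)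
  have hu : u ∈ E := by
    by_contra hu
    obtain ⟨v, hv⟩ := hE
    have hvne : v ≠ u := fun h => hu (h ▸ hv)
    obtain ⟨s, hspos, hs0, hlim⟩ := hwp v hvne
    have h0 : Tendsto (fun n => mRatio (μ (ball u (s n))) (μ (ball v (s n)))) atTop (𝓝 0) :=
      (hM v hv u hu).comp (key s hspos hs0)
    rw [h0.liminf_eq] at hlim
    simp at hlim
  intro v hvu r hrpos hr0
  by_cases hv : v ∈ E
  · obtain ⟨s, hspos, hs0, hlim⟩ := hwp v hvu
    have h1 : Tendsto (fun n => mRatio (μ (ball u (s n))) (μ (ball v (s n)))) atTop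
        (𝓝 (ENNReal.ofReal (Real.exp (I v - I u)))) :=
      (hOM u hu v hv).comp (key s hspos hs0)
    rw [h1.liminf_eq] at hlim
    have h2 : Tendsto (fun n => mRatio (μ (ball u (r n))) (μ (ball v (r n)))) atTop
        (𝓝 (ENNReal.ofReal (Real.exp (I v - I u)))) :=
      (hOM u hu v hv).comp (key r hrpos hr0)
    rw [h2.liminf_eq]
    exact hlim
  · have h0 : Tendsto (fun x : ℝ => mRatio (μ (ball v x)) (μ (ball u x)))
        (𝓝[>] (0:ℝ)) (𝓝 0) := hM u hu v hv
    have h1 : Tendsto (fun x : ℝ => mRatio (μ (ball u x)) (μ (ball v x)))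
        (𝓝[>] (0:ℝ)) (𝓝 ⊤) := by
      have h2 := h0.inv
      simp only [ENNReal.inv_zero] at h2
      exact h2.congr fun x => (mRatio_inv _ _ (measure_ne_top μ _)).symm
    have h3 : Tendsto (fun n => mRatio (μ (ball u (r n))) (μ (ball v (r n)))) atTop (𝓝 ⊤) :=
      h1.comp (key r hrpos hr0)
    rw [h3.liminf_eq]
    exact le_top
end

section
/- Let μ be the uniform distribution on [0,1] ⊂ ℝ. Then u = 0 is a generalised strong mode: for every null sequence (r_n) there exists a sequence u_n → 0 with liminf_{n→∞} μ(B(u_n,r_n))/M_{r_n} ≥ 1, where M_r = sup_x μ(B(x,r)); but u = 0 is not a strong mode, since liminf_{r→0} μ(B(0,r))/M_r = 1/2. -/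
open MeasureTheory Metric Filter Topology

/-- The uniform distribution on `[0,1] ⊂ ℝ`. -/
noncomputable def unifMeasure : Measure ℝ := volume.restrict (Set.Icc (0:ℝ) 1)

lemma unif_ball_le (x r : ℝ) : unifMeasure (ball x r) ≤ ENNReal.ofReal (2 * r) := by
  calc unifMeasure (ball x r) ≤ volume (ball x r) :=
        Measure.restrict_apply_le _ _
    _ = ENNReal.ofReal (2 * r) := Real.volume_ball x r

lemma unif_ball_center {r : ℝ} (h0 : 0 < r) (h1 : r ≤ 1/2) :
    unifMeasure (ball r r) = ENNReal.ofReal (2 * r) := by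
  rw [unifMeasure, Real.ball_eq_Ioo, Measure.restrict_apply measurableSet_Ioo]
  have hset : Set.Ioo (r - r) (r + r) ∩ Set.Icc 0 1 = Set.Ioo 0 (2 * r) := by
    ext y
    simp only [Set.mem_inter_iff, Set.mem_Ioo, Set.mem_Icc]
    constructor
    · rintro ⟨⟨ha, hb⟩, _, _⟩
      exact ⟨by linarith, by linarith⟩
    · rintro ⟨ha, hb⟩
      exact ⟨⟨by linarith, by linarith⟩, by linarith, by linarith⟩
  rw [hset, Real.volume_Ioo]
  norm_num

lemma unif_sup {r : ℝ} (h0 : 0 < r) (h1 : r ≤ 1/2) :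
    (⨆ x : ℝ, unifMeasure (ball x r)) = ENNReal.ofReal (2 * r) := by
  refine le_antisymm (iSup_le fun x => unif_ball_le x r) ?_
  rw [← unif_ball_center h0 h1]
  exact le_iSup (fun x : ℝ => unifMeasure (ball x r)) r

lemma unif_ball_zero {r : ℝ} (h0 : 0 < r) (h1 : r ≤ 1) :
    unifMeasure (ball (0:ℝ) r) = ENNReal.ofReal r := by
  rw [unifMeasure, Real.ball_eq_Ioo, Measure.restrict_apply measurableSet_Ioo]
  have hset : Set.Ioo (0 - r) (0 + r) ∩ Set.Icc 0 1 = Set.Ico 0 r := by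
    ext y
    simp only [Set.mem_inter_iff, Set.mem_Ioo, Set.mem_Icc, Set.mem_Ico]
    constructor
    · rintro ⟨⟨ha, hb⟩, hc, _⟩
      exact ⟨hc, by linarith⟩
    · rintro ⟨ha, hb⟩
      exact ⟨⟨by linarith, by linarith⟩, ha, by linarith⟩
  rw [hset, Real.volume_Ico, sub_zero]

theorem stmt14 :
    (∀ r : ℕ → ℝ, (∀ n, 0 < r n) → Tendsto r atTop (𝓝 0) →
      ∃ us : ℕ → ℝ, Tendsto us atTop (𝓝 (0:ℝ)) ∧
        1 ≤ Filter.liminf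
          (fun n => mRatio (unifMeasure (ball (us n) (r n)))
            (⨆ x : ℝ, unifMeasure (ball x (r n)))) atTop) ∧
    Filter.liminf
        (fun r : ℝ => mRatio (unifMeasure (ball (0:ℝ) r))
          (⨆ x : ℝ, unifMeasure (ball x r))) (𝓝[>] (0:ℝ)) = 1/2 := by
  constructor
  · intro r hpos hr
    refine ⟨fun n => min (r n) (1/2), ?_, ?_⟩
    · have : Tendsto (fun n => min (r n) (1/2)) atTop (𝓝 (min 0 (1/2))) :=
        hr.min tendsto_const_nhds
      simpa using this
    · have hev : ∀ᶠ n in atTop,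
          mRatio (unifMeasure (ball (min (r n) (1/2)) (r n)))
            (⨆ x : ℝ, unifMeasure (ball x (r n))) = 1 := by
        filter_upwards [hr.eventually (gt_mem_nhds (by norm_num : (0:ℝ) < 1/2))] with n hn
        have h0 := hpos n
        have h1 : r n ≤ 1/2 := le_of_lt hn
        have hmin : min (r n) (1/2) = r n := min_eq_left h1
        rw [hmin, unif_ball_center h0 h1, unif_sup h0 h1, mRatio]
        have hne : ENNReal.ofReal (2 * r n) ≠ 0 := by
          simp [ENNReal.ofReal_eq_zero]; linarith
        rw [if_neg hne]
        exact ENNReal.div_self hne ENNReal.ofReal_ne_top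
      rw [Filter.liminf_congr hev, Filter.liminf_const]
  · have hev : ∀ᶠ s in 𝓝[>] (0:ℝ),
        mRatio (unifMeasure (ball (0:ℝ) s))
          (⨆ x : ℝ, unifMeasure (ball x s)) = 1/2 := by
      have hmem : Set.Ioc (0:ℝ) (1/2) ∈ 𝓝[>] (0:ℝ) :=
        Ioc_mem_nhdsGT_of_mem (Set.mem_Ico.mpr ⟨le_refl (0:ℝ), by norm_num⟩)
      filter_upwards [hmem] with s hs
      obtain ⟨h0, h1⟩ := hs
      rw [unif_ball_zero h0 (by linarith), unif_sup h0 h1, mRatio]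
      have hne : ENNReal.ofReal (2 * s) ≠ 0 := by
        simp [ENNReal.ofReal_eq_zero]; linarith
      rw [if_neg hne, ← ENNReal.ofReal_div_of_pos (by linarith)]
      have : s / (2 * s) = 1/2 := by field_simp
      rw [this]
      rw [show (1:ℝ)/2 = 1/2 from rfl, ENNReal.ofReal_div_of_pos (by norm_num)]
      simp
    rw [Filter.liminf_congr hev, Filter.liminf_const]
end

section
/- Let μ ∈ P(ℝ^m) have a Lebesgue density ρ, let u ∈ ℝ^m, and suppose for some R > 0 that ρ restricted to B(u,R) is symmetric about u and has convex superlevel sets. Then the constant approximating sequence at u is optimal: for every null sequence (r_n) and every sequence u_n → u, liminf_{n→∞} μ(B(u,r_n))/μ(B(u_n,r_n)) ≥ 1. -/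
/-!
Slice the density into its superlevel sets: by the layer-cake formula,
`μ (ball v r) = ∫_{t > 0} vol ({ρ ≥ t} ∩ ball v r) dt`, and once `ball v r ⊆ ball u R` the set
`{ρ ≥ t} ∩ ball v r` is `K ∩ ball v r` with `K = {x ∈ ball u R | t ≤ ρ x}` convex and symmetric
about `u`. Anderson's inequality `vol (K ∩ ball v r) ≤ vol (K ∩ ball u r)` follows from
Brunn–Minkowski applied to `A = K ∩ ball v r` and its reflection through `u`, whose midpoints lie
in `K ∩ ball u r`. Brunn–Minkowski in turn comes from the Prékopa–Leindler inequality, proved on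
`ℝ` from the one-dimensional Brunn–Minkowski inequality for superlevel sets of normalized
functions, and on `ℝⁿ` by induction on the dimension through Fubini. Since `us n → u` and
`r n → 0`, eventually `μ (ball (us n) (r n)) ≤ μ (ball u (r n))`, so every ratio is at least `1`.
-/

open MeasureTheory Metric Filter Topology

open Set Pointwise
open scoped ENNReal

namespace Real

theorem volume_add_volume_le_volume_add_of_isCompact {K L : Set ℝ} (hK : IsCompact K)
    (hL : IsCompact L) (hK₀ : K.Nonempty) (hL₀ : L.Nonempty) :
    volume K + volume L ≤ volume (K + L) := by
  set a := sSup K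
  set b := sInf L
  -- `a +ᵥ L` lies to the right of `a + b` and `b +ᵥ K` to its left.
  have hdisj : AEDisjoint volume (a +ᵥ L) (b +ᵥ K) := by
    refine measure_mono_null (fun z hz => ?_) (measure_singleton (a + b))
    obtain ⟨⟨y, hy, rfl⟩, ⟨x, hx, hxz⟩⟩ := hz
    have := csInf_le hL.bddBelow hy
    have := le_csSup hK.bddAbove hx
    simp only [vadd_eq_add] at hxz ⊢
    exact le_antisymm (by linarith) (by linarith)
  calc volume K + volume L = volume (a +ᵥ L) + volume (b +ᵥ K) := by
        rw [measure_vadd, measure_vadd, add_comm]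
    _ = volume ((a +ᵥ L) ∪ (b +ᵥ K)) :=
        (measure_union₀ (hK.measurableSet.const_vadd b).nullMeasurableSet hdisj).symm
    _ ≤ volume (K + L) := by
        refine measure_mono (union_subset ?_ ?_)
        · exact vadd_set_subset_add (hK.sSup_mem hK₀)
        · rw [add_comm]; exact vadd_set_subset_add (hL.sInf_mem hL₀)

theorem volume_add_volume_le_volume_add {A B : Set ℝ} (hA : MeasurableSet A)
    (hB : MeasurableSet B) (hA₀ : A.Nonempty) (hB₀ : B.Nonempty) :
    volume A + volume B ≤ volume (A + B) := by
  obtain ⟨a, ha⟩ := hA₀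
  obtain ⟨b, hb⟩ := hB₀
  rw [hA.measure_eq_iSup_isCompact, hB.measure_eq_iSup_isCompact]
  simp only [iSup_and']
  refine ENNReal.biSup_add_biSup_le' ⟨∅, empty_subset _, isCompact_empty⟩
    ⟨∅, empty_subset _, isCompact_empty⟩ fun K ⟨hKA, hK⟩ L ⟨hLB, hL⟩ => ?_
  -- Adding a point of `A` (resp. `B`) keeps the compact set inside and makes it nonempty.
  calc volume K + volume L ≤ volume (insert a K) + volume (insert b L) :=
        add_le_add (measure_mono (subset_insert _ _)) (measure_mono (subset_insert _ _))
    _ ≤ volume (insert a K + insert b L) :=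
        volume_add_volume_le_volume_add_of_isCompact (hK.insert a) (hL.insert b)
          (insert_nonempty _ _) (insert_nonempty _ _)
    _ ≤ volume (A + B) :=
        measure_mono (add_subset_add (insert_subset ha hKA) (insert_subset hb hLB))

end Real

namespace ENNReal

theorem geom_mean_le_arith_mean2_weighted {l : ℝ} (hl₀ : 0 < l) (hl₁ : l < 1) (a b : ℝ≥0∞) :
    a ^ (1 - l) * b ^ l ≤ ENNReal.ofReal (1 - l) * a + ENNReal.ofReal l * b := by
  have hl₁' : 0 < 1 - l := sub_pos.2 hl₁
  rcases eq_or_ne a ⊤ with rfl | ha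
  · simp [mul_top (ofReal_pos.2 hl₁').ne']
  rcases eq_or_ne b ⊤ with rfl | hb
  · simp [mul_top (ofReal_pos.2 hl₀).ne']
  lift a to NNReal using ha
  lift b to NNReal using hb
  have := NNReal.geom_mean_le_arith_mean2_weighted (Real.toNNReal (1 - l)) (Real.toNNReal l) a b
    (by rw [← Real.toNNReal_add hl₁'.le hl₀.le]; simp)
  rw [Real.coe_toNNReal _ hl₁'.le, Real.coe_toNNReal _ hl₀.le] at this
  rw [← coe_rpow_of_nonneg _ hl₁'.le, ← coe_rpow_of_nonneg _ hl₀.le]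
  simp only [ENNReal.ofReal]
  exact_mod_cast this

end ENNReal

theorem lintegral_min_one_eq_setLIntegral_Ioo {α : Type*} [MeasurableSpace α] (μ : Measure α)
    {f : α → ℝ≥0∞} (hf : Measurable f) :
    ∫⁻ a, min (f a) 1 ∂μ = ∫⁻ t in Ioo 0 1, μ {a | ENNReal.ofReal t < f a} := by
  have hne : ∀ a, min (f a) 1 ≠ ⊤ := fun a =>
    ne_top_of_le_ne_top ENNReal.one_ne_top (min_le_right _ _)
  set F : α → ℝ := fun a => (min (f a) 1).toReal
  have hF₁ : ∀ a, F a ≤ 1 := fun a => ENNReal.toReal_le_of_le_ofReal zero_le_one (by simp)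
  rw [lintegral_congr fun a => (ENNReal.ofReal_toReal (hne a)).symm,
    lintegral_eq_lintegral_meas_lt μ (ae_of_all _ fun _ => ENNReal.toReal_nonneg)
    (hf.min measurable_const).ennreal_toReal.aemeasurable,
    ← setLIntegral_eq_of_support_subset (s := Iio 1), Measure.restrict_restrict measurableSet_Iio,
    Iio_inter_Ioi]
  · refine setLIntegral_congr_fun measurableSet_Ioo fun t ht => congrArg μ (Set.ext fun a => ?_)
    change t < F a ↔ _
    rw [← ENNReal.ofReal_lt_iff_lt_toReal ht.1.le (hne a), lt_min_iff]
    simp [ht.2]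
  · intro t ht
    by_contra h
    exact ht (measure_mono_null (fun a ha => (not_le.2 ha) ((hF₁ a).trans (not_lt.1 h)))
      measure_empty)

def SatisfiesPrekopaLeindler {α : Type*} [MeasurableSpace α] [AddCommMonoid α] [Module ℝ α]
    (μ : Measure α) : Prop :=
  ∀ ⦃l : ℝ⦄, 0 < l → l < 1 → ∀ ⦃f g h : α → ℝ≥0∞⦄, Measurable f → Measurable g → Measurable h →
    (∀ x y, f x ^ (1 - l) * g y ^ l ≤ h ((1 - l) • x + l • y)) →
    (∫⁻ x, f x ∂μ) ^ (1 - l) * (∫⁻ x, g x ∂μ) ^ l ≤ ∫⁻ x, h x ∂μ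

namespace Real

variable {l : ℝ} {f g h : ℝ → ℝ≥0∞}

theorem prekopaLeindler_add_of_le_one (hl₀ : 0 < l) (hl₁ : l < 1)
    (hf : Measurable f) (hg : Measurable g) (hh : Measurable h)
    (hf₁ : ∀ x, f x ≤ 1) (hg₁ : ∀ x, g x ≤ 1) (hfs : 1 ≤ ⨆ x, f x) (hgs : 1 ≤ ⨆ x, g x)
    (hfgh : ∀ x y, f x ^ (1 - l) * g y ^ l ≤ h ((1 - l) • x + l • y)) :
    ENNReal.ofReal (1 - l) * (∫⁻ x, f x) + ENNReal.ofReal l * ∫⁻ x, g x ≤ ∫⁻ x, h x := by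
  have hl₁' : 0 < 1 - l := sub_pos.2 hl₁
  have hlayer : ∀ φ : ℝ → ℝ≥0∞, Measurable φ → (∀ x, φ x ≤ 1) →
      ∫⁻ x, φ x = ∫⁻ t in Ioo 0 1, volume {x | ENNReal.ofReal t < φ x} := fun φ hφ hφ₁ => by
    simpa only [min_eq_left (hφ₁ _)] using lintegral_min_one_eq_setLIntegral_Ioo volume hφ
  have hlevel : ∀ t ∈ Ioo (0 : ℝ) 1,
      ENNReal.ofReal (1 - l) * volume {x | ENNReal.ofReal t < f x}
        + ENNReal.ofReal l * volume {x | ENNReal.ofReal t < g x}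
        ≤ volume {x | ENNReal.ofReal t < h x} := by
    intro t ht
    have hne : ∀ φ : ℝ → ℝ≥0∞, 1 ≤ ⨆ x, φ x → {x | ENNReal.ofReal t < φ x}.Nonempty :=
      fun φ hφ => lt_iSup_iff.1 ((ENNReal.ofReal_lt_one.2 ht.2).trans_le hφ)
    have hsub : (1 - l) • {x | ENNReal.ofReal t < f x} + l • {x | ENNReal.ofReal t < g x}
        ⊆ {x | ENNReal.ofReal t < h x} := by
      rintro _ ⟨_, ⟨x, hx, rfl⟩, _, ⟨y, hy, rfl⟩, rfl⟩
      calc ENNReal.ofReal t = ENNReal.ofReal t ^ (1 - l) * ENNReal.ofReal t ^ l := by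
            rw [← ENNReal.rpow_add_of_nonneg _ _ hl₁'.le hl₀.le, sub_add_cancel, ENNReal.rpow_one]
        _ < f x ^ (1 - l) * g y ^ l :=
            ENNReal.mul_lt_mul (ENNReal.rpow_lt_rpow hx hl₁') (ENNReal.rpow_lt_rpow hy hl₀)
        _ ≤ h _ := hfgh x y
    calc _ = volume ((1 - l) • {x | ENNReal.ofReal t < f x})
          + volume (l • {x | ENNReal.ofReal t < g x}) := by
          simp [Measure.addHaar_smul_of_nonneg _ hl₁'.le, Measure.addHaar_smul_of_nonneg _ hl₀.le]
      _ ≤ _ := volume_add_volume_le_volume_add ((hf measurableSet_Ioi).const_smul₀ _)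
          ((hg measurableSet_Ioi).const_smul₀ _) ((hne f hfs).smul_set) ((hne g hgs).smul_set)
      _ ≤ _ := measure_mono hsub
  rw [hlayer f hf hf₁, hlayer g hg hg₁, ← lintegral_const_mul' _ _ ENNReal.ofReal_ne_top,
    ← lintegral_const_mul' _ _ ENNReal.ofReal_ne_top]
  calc _ ≤ _ := le_lintegral_add _ _
    _ ≤ ∫⁻ t in Ioo 0 1, volume {x | ENNReal.ofReal t < h x} :=
        setLIntegral_mono' measurableSet_Ioo hlevel
    _ = ∫⁻ x, min (h x) 1 := (lintegral_min_one_eq_setLIntegral_Ioo volume hh).symm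
    _ ≤ ∫⁻ x, h x := lintegral_mono fun _ => min_le_left _ _

theorem prekopaLeindler_of_iSup_ne_top (hl₀ : 0 < l) (hl₁ : l < 1)
    (hf : Measurable f) (hg : Measurable g) (hh : Measurable h)
    (hfs : ⨆ x, f x ≠ ⊤) (hgs : ⨆ x, g x ≠ ⊤)
    (hfgh : ∀ x y, f x ^ (1 - l) * g y ^ l ≤ h ((1 - l) • x + l • y)) :
    (∫⁻ x, f x) ^ (1 - l) * (∫⁻ x, g x) ^ l ≤ ∫⁻ x, h x := by
  have hl₁' : 0 < 1 - l := sub_pos.2 hl₁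
  set a := ⨆ x, f x
  set b := ⨆ x, g x
  rcases eq_or_ne a 0 with ha₀ | ha₀
  · simp [ENNReal.iSup_eq_zero.1 ha₀, ENNReal.zero_rpow_of_pos hl₁']
  rcases eq_or_ne b 0 with hb₀ | hb₀
  · simp [ENNReal.iSup_eq_zero.1 hb₀, ENNReal.zero_rpow_of_pos hl₀]
  set C := a ^ (1 - l) * b ^ l
  have haC : a ^ (1 - l) ≠ ⊤ := ENNReal.rpow_ne_top_of_nonneg hl₁'.le hfs
  have hbC : b ^ l ≠ ⊤ := ENNReal.rpow_ne_top_of_nonneg hl₀.le hgs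
  have hC₀ : C ≠ 0 := by simp [C, ha₀, hb₀, hfs, hgs, hl₀, hl₁']
  have hCt : C ≠ ⊤ := ENNReal.mul_ne_top haC hbC
  have hdiv : ∀ (φ : ℝ → ℝ≥0∞) (c : ℝ≥0∞), c ≠ 0 → ∫⁻ x, φ x / c = (∫⁻ x, φ x) / c :=
    fun φ c hc => by
      simp_rw [div_eq_mul_inv]; exact lintegral_mul_const' _ _ (ENNReal.inv_ne_top.2 hc)
  have hdiv_rpow : ∀ x y, (x / a) ^ (1 - l) * (y / b) ^ l = x ^ (1 - l) * y ^ l / C := fun x y => by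
    rw [ENNReal.div_rpow_of_nonneg _ _ hl₁'.le, ENNReal.div_rpow_of_nonneg _ _ hl₀.le,
      ENNReal.mul_div_mul_comm (Or.inr hbC) (Or.inl haC)]
  -- Normalize `f` and `g` by their suprema and `h` by `C`; AM–GM turns the additive form back
  -- into the multiplicative one.
  have key := prekopaLeindler_add_of_le_one hl₀ hl₁ (f := fun x => f x / a) (g := fun x => g x / b)
    (h := fun x => h x / C) (hf.div_const a) (hg.div_const b) (hh.div_const C)
    (fun x => ENNReal.div_le_of_le_mul (by simpa using le_iSup f x))
    (fun x => ENNReal.div_le_of_le_mul (by simpa using le_iSup g x))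
    (by rw [← ENNReal.iSup_div, ENNReal.div_self ha₀ hfs])
    (by rw [← ENNReal.iSup_div, ENNReal.div_self hb₀ hgs])
    (fun x y => by rw [hdiv_rpow]; exact ENNReal.div_le_div_right (hfgh x y) C)
  rw [hdiv f a ha₀, hdiv g b hb₀, hdiv h C hC₀] at key
  calc (∫⁻ x, f x) ^ (1 - l) * (∫⁻ x, g x) ^ l
      = C * (((∫⁻ x, f x) / a) ^ (1 - l) * ((∫⁻ x, g x) / b) ^ l) := by
        rw [hdiv_rpow, ENNReal.mul_div_cancel hC₀ hCt]
    _ ≤ C * ((∫⁻ x, h x) / C) := by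
        gcongr
        exact (ENNReal.geom_mean_le_arith_mean2_weighted hl₀ hl₁ _ _).trans key
    _ = ∫⁻ x, h x := ENNReal.mul_div_cancel hC₀ hCt

theorem satisfiesPrekopaLeindler_volume : SatisfiesPrekopaLeindler (volume : Measure ℝ) := by
  intro l hl₀ hl₁ f g h hf hg hh hfgh
  have hl₁' : 0 < 1 - l := sub_pos.2 hl₁
  have htrunc : ∀ φ : ℝ → ℝ≥0∞, Measurable φ →
      Tendsto (fun n : ℕ => ∫⁻ x, min (φ x) n) atTop (𝓝 (∫⁻ x, φ x)) := fun φ hφ => by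
    refine lintegral_tendsto_of_tendsto_of_monotone
      (fun n => (hφ.min measurable_const).aemeasurable)
      (ae_of_all _ fun x i j hij => min_le_min_left _ (Nat.cast_le.2 hij)) (ae_of_all _ fun x => ?_)
    simpa using tendsto_const_nhds.min ENNReal.tendsto_nat_nhds_top
  rcases eq_or_ne (∫⁻ x, f x) 0 with hf₀ | hf₀
  · simp [hf₀, ENNReal.zero_rpow_of_pos hl₁']
  rcases eq_or_ne (∫⁻ x, g x) 0 with hg₀ | hg₀
  · simp [hg₀, ENNReal.zero_rpow_of_pos hl₀]
  refine le_of_tendsto' (ENNReal.Tendsto.mul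
    ((ENNReal.continuous_rpow_const.tendsto _).comp (htrunc f hf)) (Or.inl (by simp [hf₀, hl₁.le]))
    ((ENNReal.continuous_rpow_const.tendsto _).comp (htrunc g hg)) (Or.inl (by simp [hg₀, hl₀.le])))
    fun n => ?_
  have hbdd : ∀ φ : ℝ → ℝ≥0∞, ⨆ x, min (φ x) n ≠ ⊤ := fun φ =>
    ne_top_of_le_ne_top (ENNReal.natCast_ne_top n) (iSup_le fun _ => min_le_right _ _)
  refine prekopaLeindler_of_iSup_ne_top hl₀ hl₁ (hf.min measurable_const)
    (hg.min measurable_const) hh (hbdd f) (hbdd g) fun x y => le_trans ?_ (hfgh x y)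
  gcongr <;> exact min_le_left _ _

end Real

section PrekopaLeindler

variable {α β : Type*} [MeasurableSpace α] [AddCommMonoid α] [Module ℝ α]
  [MeasurableSpace β] [AddCommMonoid β] [Module ℝ β]

theorem satisfiesPrekopaLeindler_of_unique [Unique α] (μ : Measure α) :
    SatisfiesPrekopaLeindler μ := by
  intro l hl₀ hl₁ f g h _ _ _ hfgh
  have hl₁' : 0 < 1 - l := sub_pos.2 hl₁
  simp only [lintegral_unique]
  calc (f default * μ univ) ^ (1 - l) * (g default * μ univ) ^ l
      = f default ^ (1 - l) * g default ^ l * μ univ := by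
        rw [ENNReal.mul_rpow_of_nonneg _ _ hl₁'.le, ENNReal.mul_rpow_of_nonneg _ _ hl₀.le,
          mul_mul_mul_comm, ← ENNReal.rpow_add_of_nonneg _ _ hl₁'.le hl₀.le, sub_add_cancel,
          ENNReal.rpow_one]
    _ ≤ h default * μ univ := by
        gcongr
        exact (hfgh default default).trans_eq (congrArg h (Unique.eq_default _))

theorem SatisfiesPrekopaLeindler.of_measurePreserving {μ : Measure α} {ν : Measure β}
    (hν : SatisfiesPrekopaLeindler ν) {e : β → α} (he : MeasurePreserving e ν μ)
    (hlin : IsLinearMap ℝ e) : SatisfiesPrekopaLeindler μ := by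
  intro l hl₀ hl₁ f g h hf hg hh hfgh
  rw [← he.lintegral_comp hf, ← he.lintegral_comp hg, ← he.lintegral_comp hh]
  refine hν hl₀ hl₁ (hf.comp he.measurable) (hg.comp he.measurable) (hh.comp he.measurable)
    fun x y => ?_
  simpa only [hlin.map_add, hlin.map_smul] using hfgh (e x) (e y)

/-- Fubini: integrating out the second factor turns the hypothesis on the product into the
hypothesis for the first factor, by the inequality on the second one. -/
theorem SatisfiesPrekopaLeindler.prod {μ : Measure α} {ν : Measure β} [SFinite ν]
    (hμ : SatisfiesPrekopaLeindler μ) (hν : SatisfiesPrekopaLeindler ν) :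
    SatisfiesPrekopaLeindler (μ.prod ν) := by
  intro l hl₀ hl₁ f g h hf hg hh hfgh
  rw [lintegral_prod _ hf.aemeasurable, lintegral_prod _ hg.aemeasurable,
    lintegral_prod _ hh.aemeasurable]
  refine hμ hl₀ hl₁ hf.lintegral_prod_right' hg.lintegral_prod_right' hh.lintegral_prod_right'
    fun x₁ y₁ => hν hl₀ hl₁ (hf.comp measurable_prodMk_left) (hg.comp measurable_prodMk_left)
      (hh.comp measurable_prodMk_left) fun x₂ y₂ => ?_
  simpa only [Prod.smul_mk, Prod.mk_add_mk] using hfgh (x₁, x₂) (y₁, y₂)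

end PrekopaLeindler

theorem satisfiesPrekopaLeindler_volume_pi (n : ℕ) :
    SatisfiesPrekopaLeindler (volume : Measure (Fin n → ℝ)) := by
  induction n with
  | zero => exact satisfiesPrekopaLeindler_of_unique _
  | succ n ih =>
    refine (Real.satisfiesPrekopaLeindler_volume.prod ih).of_measurePreserving
      (volume_preserving_piFinSuccAbove (fun _ => ℝ) 0).symm ⟨fun x y => ?_, fun c x => ?_⟩ <;>
    ext j <;> refine Fin.cases ?_ (fun i => ?_) j <;> simp [MeasurableEquiv.piFinSuccAbove]

theorem satisfiesPrekopaLeindler_volume_euclideanSpace (m : ℕ) :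
    SatisfiesPrekopaLeindler (volume : Measure (EuclideanSpace ℝ (Fin m))) :=
  (satisfiesPrekopaLeindler_volume_pi m).of_measurePreserving (PiLp.volume_preserving_toLp (Fin m))
    ⟨WithLp.toLp_add 2, WithLp.toLp_smul 2⟩

theorem SatisfiesPrekopaLeindler.measure_rpow_mul_measure_rpow_le {α : Type*} [MeasurableSpace α]
    [AddCommMonoid α] [Module ℝ α] {μ : Measure α} (hμ : SatisfiesPrekopaLeindler μ) {l : ℝ}
    (hl₀ : 0 < l) (hl₁ : l < 1) {A B S : Set α} (hA : MeasurableSet A) (hB : MeasurableSet B)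
    (hS : MeasurableSet S) (hABS : ∀ x ∈ A, ∀ y ∈ B, (1 - l) • x + l • y ∈ S) :
    μ A ^ (1 - l) * μ B ^ l ≤ μ S := by
  have hl₁' : 0 < 1 - l := sub_pos.2 hl₁
  have := hμ hl₀ hl₁ (measurable_one.indicator hA) (measurable_one.indicator hB)
    (measurable_one.indicator hS) fun x y => ?_
  · simpa only [lintegral_indicator_one hA, lintegral_indicator_one hB,
      lintegral_indicator_one hS] using this
  by_cases hx : x ∈ A
  · by_cases hy : y ∈ B
    · simp [hx, hy, hABS x hx y hy]
    · simp [hy, ENNReal.zero_rpow_of_pos hl₀]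
  · simp [hx, ENNReal.zero_rpow_of_pos hl₁']

theorem Convex.addHaar_closure {E : Type*} [NormedAddCommGroup E] [NormedSpace ℝ E]
    [MeasurableSpace E] [BorelSpace E] [FiniteDimensional ℝ E] (μ : Measure E)
    [μ.IsAddHaarMeasure] {s : Set E} (hs : Convex ℝ s) : μ (closure s) = μ s := by
  refine le_antisymm ?_ (measure_mono subset_closure)
  calc μ (closure s) ≤ μ s + μ (frontier s) := by
        rw [closure_eq_self_union_frontier]; exact measure_union_le _ _
    _ = μ s := by rw [hs.addHaar_frontier μ, add_zero]

section EuclideanSpace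

variable {m : ℕ}

/-- Brunn–Minkowski: pass to closures, which are measurable and, for convex sets, have the same
volume. -/
theorem Convex.volume_rpow_mul_volume_rpow_le {A B S : Set (EuclideanSpace ℝ (Fin m))}
    (hA : Convex ℝ A) (hB : Convex ℝ B) (hS : Convex ℝ S) {l : ℝ} (hl₀ : 0 < l) (hl₁ : l < 1)
    (hABS : ∀ x ∈ A, ∀ y ∈ B, (1 - l) • x + l • y ∈ S) :
    volume A ^ (1 - l) * volume B ^ l ≤ volume S := by
  rw [← hA.addHaar_closure volume, ← hB.addHaar_closure volume, ← hS.addHaar_closure volume]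
  refine (satisfiesPrekopaLeindler_volume_euclideanSpace m).measure_rpow_mul_measure_rpow_le
    hl₀ hl₁ isClosed_closure.measurableSet isClosed_closure.measurableSet
    isClosed_closure.measurableSet fun x hx y hy => ?_
  exact map_mem_closure₂ (f := fun x y => (1 - l) • x + l • y) (by fun_prop) hx hy hABS

/-- Anderson's inequality for indicators: every midpoint of `K ∩ ball v r` and of its reflection
through `u` lies in `K ∩ ball u r`, so Brunn–Minkowski applies. -/
theorem Convex.volume_inter_ball_le_of_symmetric {K : Set (EuclideanSpace ℝ (Fin m))}
    (hK : Convex ℝ K) {u : EuclideanSpace ℝ (Fin m)} (hKu : ∀ x, u + x ∈ K → u - x ∈ K)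
    (v : EuclideanSpace ℝ (Fin m)) (r : ℝ) :
    volume (K ∩ ball v r) ≤ volume (K ∩ ball u r) := by
  set A := K ∩ ball v r
  have hA : Convex ℝ A := hK.inter (convex_ball v r)
  have hreflect : volume ((2 : ℝ) • u +ᵥ -A) = volume A := by
    rw [measure_vadd, Measure.measure_neg]
  have hmid : ∀ x ∈ A, ∀ y ∈ (2 : ℝ) • u +ᵥ -A,
      (1 - 2⁻¹ : ℝ) • x + (2⁻¹ : ℝ) • y ∈ K ∩ ball u r := by
    rintro x ⟨hxK, hxv⟩ _ ⟨z, ⟨hzK, hzv⟩, rfl⟩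
    have hzK' : (2 : ℝ) • u +ᵥ z ∈ K := by
      convert hKu (-z - u) (by simpa using hzK) using 1
      simp only [vadd_eq_add]; module
    refine ⟨hK hxK hzK' (by norm_num) (by norm_num) (by norm_num), ?_⟩
    rw [mem_ball, dist_eq_norm] at hxv hzv ⊢
    calc ‖(1 - 2⁻¹ : ℝ) • x + (2⁻¹ : ℝ) • ((2 : ℝ) • u +ᵥ z) - u‖
        = ‖(2⁻¹ : ℝ) • ((x - v) - (-z - v))‖ := by
          congr 1; simp only [vadd_eq_add]; module
      _ = 2⁻¹ * ‖(x - v) - (-z - v)‖ := by rw [norm_smul]; norm_num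
      _ ≤ 2⁻¹ * (‖x - v‖ + ‖-z - v‖) := by gcongr; exact norm_sub_le _ _
      _ < r := by linarith
  calc volume A = volume A ^ (1 - 2⁻¹ : ℝ) * volume ((2 : ℝ) • u +ᵥ -A) ^ (2⁻¹ : ℝ) := by
        rw [hreflect, ← ENNReal.rpow_add_of_nonneg _ _ (by norm_num) (by norm_num),
          sub_add_cancel, ENNReal.rpow_one]
    _ ≤ volume (K ∩ ball u r) :=
        hA.volume_rpow_mul_volume_rpow_le (hA.neg.vadd _) (hK.inter (convex_ball u r))
          (by norm_num) (by norm_num) hmid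

end EuclideanSpace

section LayerCake

variable {α : Type*} [MeasurableSpace α] {μ : Measure α}

theorem aemeasurable_of_nullMeasurableSet_le {β : Type*} [TopologicalSpace β] [MeasurableSpace β]
    [BorelSpace β] [LinearOrder β] [OrderTopology β] [SecondCountableTopology β] {f : α → β}
    (hf : ∀ t, NullMeasurableSet {x | t ≤ f x} μ) : AEMeasurable f μ :=
  NullMeasurable.aemeasurable (measurable_of_Ici hf)

theorem setLIntegral_ofReal_eq_lintegral_measure_le_inter {ρ : α → ℝ} (hρ : ∀ x, 0 ≤ ρ x)
    {s : Set α} (hs : MeasurableSet s) (hρs : ∀ t, NullMeasurableSet ({x | t ≤ ρ x} ∩ s) μ) :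
    ∫⁻ x in s, ENNReal.ofReal (ρ x) ∂μ = ∫⁻ t in Ioi 0, μ ({x | t ≤ ρ x} ∩ s) := by
  have hmeas : AEMeasurable ρ (μ.restrict s) := aemeasurable_of_nullMeasurableSet_le fun t =>
    (nullMeasurableSet_restrict hs.nullMeasurableSet).2 (hρs t)
  simp_rw [lintegral_eq_lintegral_meas_le _ (ae_of_all _ hρ) hmeas, Measure.restrict_apply' hs]

end LayerCake

theorem withDensity_ball_le_withDensity_ball_center {m : ℕ} {ρ : EuclideanSpace ℝ (Fin m) → ℝ}
    {u : EuclideanSpace ℝ (Fin m)} {R : ℝ} (hρ : ∀ x, 0 ≤ ρ x)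
    (hsym : ∀ x : EuclideanSpace ℝ (Fin m), ‖x‖ < R → ρ (u + x) = ρ (u - x))
    (hconv : ∀ t : ℝ, Convex ℝ {x : EuclideanSpace ℝ (Fin m) | x ∈ ball u R ∧ t ≤ ρ x})
    {v : EuclideanSpace ℝ (Fin m)} {r : ℝ} (hvr : r + dist v u ≤ R) :
    volume.withDensity (fun x => ENNReal.ofReal (ρ x)) (ball v r)
      ≤ volume.withDensity (fun x => ENNReal.ofReal (ρ x)) (ball u r) := by
  have hmass : ∀ c, ball c r ⊆ ball u R →
      volume.withDensity (fun x => ENNReal.ofReal (ρ x)) (ball c r)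
        = ∫⁻ t in Ioi 0, volume ({x | x ∈ ball u R ∧ t ≤ ρ x} ∩ ball c r) := fun c hc => by
    have hslice : ∀ t, {x | t ≤ ρ x} ∩ ball c r = {x | x ∈ ball u R ∧ t ≤ ρ x} ∩ ball c r :=
      fun t => Set.ext fun x => ⟨fun ⟨ht, hx⟩ => ⟨⟨hc hx, ht⟩, hx⟩, fun ⟨⟨_, ht⟩, hx⟩ => ⟨ht, hx⟩⟩
    rw [withDensity_apply _ measurableSet_ball,
      setLIntegral_ofReal_eq_lintegral_measure_le_inter hρ measurableSet_ball fun t => by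
        rw [hslice]; exact ((hconv t).inter (convex_ball c r)).nullMeasurableSet volume]
    simp_rw [hslice]
  rw [hmass v (ball_subset_ball' hvr),
    hmass u (ball_subset_ball (by linarith [dist_nonneg (x := v) (y := u)]))]
  refine lintegral_mono fun t =>
    (hconv t).volume_inter_ball_le_of_symmetric (fun x ⟨hx, ht⟩ => ?_) v r
  rw [mem_ball, dist_self_add_left] at hx
  refine ⟨by rwa [mem_ball, dist_eq_norm, sub_sub_cancel_left, norm_neg], ?_⟩
  rwa [← hsym x hx]

theorem one_le_mRatio {a b : ℝ≥0∞} (hba : b ≤ a) (hb : b ≠ ⊤) : 1 ≤ mRatio a b := by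
  unfold mRatio
  split_ifs with hb₀ ha₀
  · exact le_rfl
  · exact le_top
  · exact (ENNReal.le_div_iff_mul_le (Or.inl hb₀) (Or.inl hb)).2 (by rwa [one_mul])

theorem stmt17_general {m : ℕ} (ρ : EuclideanSpace ℝ (Fin m) → ℝ) (hρ : ∀ x, 0 ≤ ρ x)
    (μ : Measure (EuclideanSpace ℝ (Fin m))) [IsProbabilityMeasure μ]
    (hμ : μ = volume.withDensity (fun x => ENNReal.ofReal (ρ x)))
    (u : EuclideanSpace ℝ (Fin m)) (R : ℝ) (hR : 0 < R)
    (hsym : ∀ x : EuclideanSpace ℝ (Fin m), ‖x‖ < R → ρ (u + x) = ρ (u - x))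
    (hconv : ∀ t : ℝ, Convex ℝ {x : EuclideanSpace ℝ (Fin m) | x ∈ ball u R ∧ t ≤ ρ x})
    (r : ℕ → ℝ) (hr : Tendsto r atTop (𝓝 0))
    (us : ℕ → EuclideanSpace ℝ (Fin m)) (hus : Tendsto us atTop (𝓝 u)) :
    1 ≤ Filter.liminf
      (fun n => mRatio (μ (ball u (r n))) (μ (ball (us n) (r n)))) atTop := by
  have hle : ∀ᶠ n in atTop, μ (ball (us n) (r n)) ≤ μ (ball u (r n)) := by
    filter_upwards [hr.eventually (gt_mem_nhds (half_pos hR)),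
      hus.eventually (ball_mem_nhds u (half_pos hR))] with n hrn hun
    rw [hμ]
    exact withDensity_ball_le_withDensity_ball_center hρ hsym hconv
      (by linarith)
  refine le_liminf_of_le (by isBoundedDefault) ?_
  filter_upwards [hle] with n hn using one_le_mRatio hn (measure_ne_top μ _)

theorem stmt17 {m : ℕ} (ρ : EuclideanSpace ℝ (Fin m) → ℝ) (hρ : ∀ x, 0 ≤ ρ x)
    (μ : Measure (EuclideanSpace ℝ (Fin m))) [IsProbabilityMeasure μ]
    (hμ : μ = volume.withDensity (fun x => ENNReal.ofReal (ρ x)))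
    (u : EuclideanSpace ℝ (Fin m)) (R : ℝ) (hR : 0 < R)
    (hsym : ∀ x : EuclideanSpace ℝ (Fin m), ‖x‖ < R → ρ (u + x) = ρ (u - x))
    (hconv : ∀ t : ℝ, Convex ℝ {x : EuclideanSpace ℝ (Fin m) | x ∈ ball u R ∧ t ≤ ρ x})
    (r : ℕ → ℝ) (hrpos : ∀ n, 0 < r n) (hr : Tendsto r atTop (𝓝 0))
    (us : ℕ → EuclideanSpace ℝ (Fin m)) (hus : Tendsto us atTop (𝓝 u)) :
    1 ≤ Filter.liminf
      (fun n => mRatio (μ (ball u (r n))) (μ (ball (us n) (r n)))) atTop :=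
  stmt17_general ρ hρ μ hμ u R hR hsym hconv r hr us hus
end

section
/- Let (X, d) be a locally compact separable metric space, μ a Borel probability measure on X, and u ∈ X such that for every null sequence (r_n), every v ∈ X \ {u}, and every sequence v_n → v, there exists a sequence u_n → u with liminf_{n→∞} μ(B(u_n,r_n))/μ(B(v_n,r_n)) ≥ 1. Then there exist a null sequence (r_n) and a sequence u_n → u such that for every sequence v_n → u, liminf_{n→∞} μ(B(u_n,r_n))/μ(B(v_n,r_n)) ≥ 1; that is, an optimal approximating sequence of u exists. -/
open MeasureTheory Metric Filter Topology

/-! Fix a compact neighbourhood `K` of `u`. For radii `rₙ → 0` choose points `xₙ ∈ K` whose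
`rₙ`-balls carry, up to a factor tending to `1`, the largest mass among balls centred in `K`.
Any `vₙ → u` eventually lies in `K`, so `(xₙ)` dominates every such sequence. Along a subsequence
`xₙ → a ∈ K`; if `a = u` then `(xₙ)` itself is optimal, and otherwise the hypothesis at `v = a`
yields `uₙ → u` dominating `(xₙ)`, hence dominating every `vₙ → u`. -/

namespace BallMass

open scoped ENNReal

lemma mRatio_self {a : ℝ≥0∞} (ha : a ≠ ⊤) : mRatio a a = 1 := by
  rcases eq_or_ne a 0 with h | h
  · simp [mRatio, h]
  · simp [mRatio, h, ENNReal.div_self h ha]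

lemma mul_mRatio_le_mRatio {A B C c : ℝ≥0∞} (hc0 : c ≠ 0) (hc1 : c ≤ 1) (hCB : c * C ≤ B) :
    c * mRatio A B ≤ mRatio A C := by
  have hct : c ≠ ⊤ := ne_top_of_le_ne_top ENNReal.one_ne_top hc1
  rcases eq_or_ne C 0 with hC | hC
  · rcases eq_or_ne A 0 with hA | hA
    · rcases eq_or_ne B 0 with hB | hB <;> simp [mRatio, hA, hB, hC, hc1]
    · simp [mRatio, hA, hC]
  have hB : B ≠ 0 := fun h => by simp_all
  have hCle : C ≤ B / c := (ENNReal.le_div_iff_mul_le (Or.inl hc0) (Or.inl hct)).2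
    (by rwa [mul_comm])
  calc c * mRatio A B = A / (B / c) := by
        rw [mRatio, if_neg hB, div_eq_mul_inv A (B / c), ENNReal.inv_div (Or.inl hct) (Or.inl hc0),
          div_eq_mul_inv, div_eq_mul_inv]
        ring
    _ ≤ A / C := ENNReal.div_le_div_left hCle A
    _ = mRatio A C := by rw [mRatio, if_neg hC]

lemma one_le_liminf_mRatio_of_mul_le {ι : Type*} {l : Filter ι} {A B C : ι → ℝ≥0∞}
    (hCB : ∀ c < 1, ∀ᶠ i in l, c * C i ≤ B i)
    (hAB : 1 ≤ liminf (fun i => mRatio (A i) (B i)) l) :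
    1 ≤ liminf (fun i => mRatio (A i) (C i)) l := by
  rw [le_liminf_iff]
  intro b hb
  obtain ⟨c, hbc, hc1⟩ := exists_between hb
  have hc0 : c ≠ 0 := (zero_le.trans_lt hbc).ne'
  have hct : c ≠ ⊤ := ne_top_of_lt hc1
  have hbc1 : b / c < 1 := by
    rwa [ENNReal.div_lt_iff (Or.inl hc0) (Or.inl hct), one_mul]
  filter_upwards [eventually_lt_of_lt_liminf (hbc1.trans_le hAB), hCB c hc1] with i hAB hCB
  calc b = c * (b / c) := (ENNReal.mul_div_cancel hc0 hct).symm
    _ < c * mRatio (A i) (B i) := (ENNReal.mul_lt_mul_iff_right hc0 hct).2 hAB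
    _ ≤ mRatio (A i) (C i) := mul_mRatio_le_mRatio hc0 hc1.le hCB

lemma exists_mem_mul_biSup_le {α : Type*} {s : Set α} (hs : s.Nonempty) {f : α → ℝ≥0∞}
    (hf : ⨆ x ∈ s, f x ≠ ⊤) {c : ℝ≥0∞} (hc : c < 1) : ∃ x ∈ s, c * ⨆ y ∈ s, f y ≤ f x := by
  rcases eq_or_ne (⨆ y ∈ s, f y) 0 with h0 | h0
  · obtain ⟨x, hx⟩ := hs
    exact ⟨x, hx, by simp [h0]⟩
  have hlt : c * ⨆ y ∈ s, f y < ⨆ y ∈ s, f y := by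
    simpa using ENNReal.mul_lt_mul_left h0 hf hc
  simp only [lt_iSup_iff] at hlt
  obtain ⟨x, hx, hlt⟩ := hlt
  exact ⟨x, hx, hlt.le⟩

variable {X : Type*} [MetricSpace X] [MeasurableSpace X]

def Dominates (μ : Measure X) (r : ℕ → ℝ) (us vs : ℕ → X) : Prop :=
  1 ≤ liminf (fun n => mRatio (μ (ball (us n) (r n))) (μ (ball (vs n) (r n)))) atTop

lemma dominates_self (μ : Measure X) [IsFiniteMeasure μ] (r : ℕ → ℝ) (xs : ℕ → X) :
    Dominates μ r xs xs := by
  simp [Dominates, mRatio_self (measure_ne_top μ _)]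

def IsAsympBallMaximizer (μ : Measure X) (K : Set X) (r : ℕ → ℝ) (xs : ℕ → X) : Prop :=
  ∀ c < 1, ∀ᶠ n in atTop, ∀ y ∈ K, c * μ (ball y (r n)) ≤ μ (ball (xs n) (r n))

lemma exists_isAsympBallMaximizer (μ : Measure X) [IsFiniteMeasure μ] {K : Set X}
    (hK : K.Nonempty) (r : ℕ → ℝ) :
    ∃ xs : ℕ → X, (∀ n, xs n ∈ K) ∧ IsAsympBallMaximizer μ K r xs := by
  obtain ⟨c, -, hc, hc1⟩ := exists_seq_strictMono_tendsto' (zero_lt_one' ℝ≥0∞)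
  have hfin : ∀ n, ⨆ y ∈ K, μ (ball y (r n)) ≠ ⊤ := fun n =>
    ne_top_of_le_ne_top (measure_ne_top μ Set.univ) (iSup₂_le fun _ _ => measure_mono (by simp))
  choose xs hxsK hxs using fun n => exists_mem_mul_biSup_le hK (hfin n) (hc n).2
  refine ⟨xs, hxsK, fun c' hc' => ?_⟩
  filter_upwards [hc1.eventually (eventually_ge_nhds hc')] with n hn y hy
  calc c' * μ (ball y (r n)) ≤ c n * ⨆ y ∈ K, μ (ball y (r n)) :=
        mul_le_mul' hn (le_biSup (fun y => μ (ball y (r n))) hy)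
    _ ≤ μ (ball (xs n) (r n)) := hxs n

lemma IsAsympBallMaximizer.comp {μ : Measure X} {K : Set X} {r : ℕ → ℝ} {xs : ℕ → X}
    (h : IsAsympBallMaximizer μ K r xs) {φ : ℕ → ℕ} (hφ : Tendsto φ atTop atTop) :
    IsAsympBallMaximizer μ K (r ∘ φ) (xs ∘ φ) :=
  fun c hc => hφ.eventually (h c hc)

lemma IsAsympBallMaximizer.dominates {μ : Measure X} {K : Set X} {r : ℕ → ℝ} {xs us vs : ℕ → X}
    {u : X} (h : IsAsympBallMaximizer μ K r xs) (hK : K ∈ 𝓝 u) (hus : Dominates μ r us xs)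
    (hvs : Tendsto vs atTop (𝓝 u)) : Dominates μ r us vs :=
  one_le_liminf_mRatio_of_mul_le (fun c hc => by
    filter_upwards [h c hc, hvs.eventually hK] with n hn hvn using hn _ hvn) hus

end BallMass

open BallMass in
theorem stmt19_general {X : Type*} [MetricSpace X]
    [LocallyCompactSpace X] [MeasurableSpace X]
    (μ : Measure X) [IsProbabilityMeasure μ] (u : X)
    (hdom : ∀ r : ℕ → ℝ, (∀ n, 0 < r n) → Tendsto r atTop (𝓝 0) →
      ∀ v : X, v ≠ u → ∀ vs : ℕ → X, Tendsto vs atTop (𝓝 v) →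
        ∃ us : ℕ → X, Tendsto us atTop (𝓝 u) ∧
          1 ≤ Filter.liminf
            (fun n => mRatio (μ (ball (us n) (r n))) (μ (ball (vs n) (r n)))) atTop) :
    ∃ r : ℕ → ℝ, (∀ n, 0 < r n) ∧ Tendsto r atTop (𝓝 0) ∧
      ∃ us : ℕ → X, Tendsto us atTop (𝓝 u) ∧
        ∀ vs : ℕ → X, Tendsto vs atTop (𝓝 u) →
          1 ≤ Filter.liminf
            (fun n => mRatio (μ (ball (us n) (r n))) (μ (ball (vs n) (r n)))) atTop := by
  obtain ⟨K, hKc, hK⟩ := exists_compact_mem_nhds u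
  obtain ⟨xs, hxsK, hxs⟩ :=
    exists_isAsympBallMaximizer μ ⟨u, mem_of_mem_nhds hK⟩ fun n => 1 / ((n : ℝ) + 1)
  obtain ⟨a, -, φ, hφ, hxa⟩ := hKc.tendsto_subseq hxsK
  set r : ℕ → ℝ := fun k => 1 / ((φ k : ℝ) + 1)
  have hr0 : ∀ k, 0 < r k := fun k => by positivity
  have hr : Tendsto r atTop (𝓝 0) :=
    tendsto_one_div_add_atTop_nhds_zero_nat.comp hφ.tendsto_atTop
  obtain ⟨us, hus, hdomx⟩ : ∃ us, Tendsto us atTop (𝓝 u) ∧ Dominates μ r us (xs ∘ φ) := by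
    by_cases hau : a = u
    · exact ⟨xs ∘ φ, hau ▸ hxa, dominates_self μ r _⟩
    · exact hdom r hr0 hr a hau _ hxa
  exact ⟨r, hr0, hr, us, hus, fun vs hvs => (hxs.comp hφ.tendsto_atTop).dominates hK hdomx hvs⟩

theorem stmt19 {X : Type*} [MetricSpace X] [TopologicalSpace.SeparableSpace X]
    [LocallyCompactSpace X] [MeasurableSpace X] [BorelSpace X]
    (μ : Measure X) [IsProbabilityMeasure μ] (u : X)
    (hdom : ∀ r : ℕ → ℝ, (∀ n, 0 < r n) → Tendsto r atTop (𝓝 0) →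
      ∀ v : X, v ≠ u → ∀ vs : ℕ → X, Tendsto vs atTop (𝓝 v) →
        ∃ us : ℕ → X, Tendsto us atTop (𝓝 u) ∧
          1 ≤ Filter.liminf
            (fun n => mRatio (μ (ball (us n) (r n))) (μ (ball (vs n) (r n)))) atTop) :
    ∃ r : ℕ → ℝ, (∀ n, 0 < r n) ∧ Tendsto r atTop (𝓝 0) ∧
      ∃ us : ℕ → X, Tendsto us atTop (𝓝 u) ∧
        ∀ vs : ℕ → X, Tendsto vs atTop (𝓝 u) →
          1 ≤ Filter.liminf
            (fun n => mRatio (μ (ball (us n) (r n))) (μ (ball (vs n) (r n)))) atTop :=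
  stmt19_general μ u hdom
end
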